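/- arXiv:1907.01313 — 13 statements merged into one kernel-verified Lean document; each statement's English description precedes it below -/
import Mathlib

section
/- Let T be an n×n complex matrix such that 1 is an eigenvalue of T whose algebraic multiplicity as a root of the characteristic polynomial of T equals 1, let π ∈ ℂ^n be nonzero with Tπ = π, let e ∈ ℂ^n be nonzero with e^*T = e^*, and assume e^*π ≠ 0. Then for any vectors t, u ∈ ℂ^n with e^*t ≠ 0 and u^*π ≠ 0, the matrix I − T + t u^* is invertible, and its inverse is a generalized inverse of I − T, i.e. (I − T)(I − T + t u^*)^{-1}(I − T) = I − T. -/
open Matrix Polynomial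

set_option maxHeartbeats 1000000 in
/-- If `1` has algebraic multiplicity `1` in the characteristic polynomial of `T`, then the
eigenspace of `T` at `1` is spanned by any nonzero eigenvector `π`. -/
lemma eigvec_unique_aux {n : ℕ} (T : Matrix (Fin n) (Fin n) ℂ)
    (hmult : (Matrix.charpoly T).rootMultiplicity 1 = 1)
    {π x : Fin n → ℂ} (hπ0 : π ≠ 0) (hTπ : T.mulVec π = π) (hTx : T.mulVec x = x) :
    ∃ c : ℂ, x = c • π := by
  by_contra hc
  push_neg at hc
  have hli : LinearIndependent ℂ ![π, x] :=
    (LinearIndependent.pair_iff' hπ0).mpr (fun a h => hc a h.symm)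
  have hs : LinearIndepOn ℂ id (Set.range ![π, x]) :=
    hli.linearIndepOn_id
  classical
  let b := Module.Basis.extend hs
  haveI : Fintype (hs.extend (Set.subset_univ _)) := FiniteDimensional.fintypeBasisIndex b
  let i0 : hs.extend (Set.subset_univ _) := ⟨π, hs.subset_extend _ ⟨0, rfl⟩⟩
  let i1 : hs.extend (Set.subset_univ _) := ⟨x, hs.subset_extend _ ⟨1, rfl⟩⟩
  have hne : i0 ≠ i1 := by
    intro h
    exact hc 1 (by rw [one_smul]; exact (congrArg Subtype.val h).symm)
  have hb0 : b i0 = π := Module.Basis.extend_apply_self hs i0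
  have hb1 : b i1 = x := Module.Basis.extend_apply_self hs i1
  set f := Matrix.toLin (Pi.basisFun ℂ (Fin n)) (Pi.basisFun ℂ (Fin n)) T with hf
  have hfapp : ∀ v, f v = T.mulVec v := by
    intro v; rw [hf, Matrix.toLin_eq_toLin', Matrix.toLin'_apply]
  set M := LinearMap.toMatrix b b f with hM
  have hchar : M.charpoly = T.charpoly := by
    rw [hM, LinearMap.charpoly_toMatrix f b, ← LinearMap.charpoly_toMatrix f
      (Pi.basisFun ℂ (Fin n)), hf, LinearMap.toMatrix_toLin]
  have hrepr0 := b.repr_self i0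
  rw [hb0] at hrepr0
  have hrepr1 := b.repr_self i1
  rw [hb1] at hrepr1
  have hcol0 : ∀ i, M i i0 = if i = i0 then 1 else 0 := by
    intro i
    rw [hM, LinearMap.toMatrix_apply, hb0, hfapp, hTπ, hrepr0, Finsupp.single_apply]
    simp only [eq_comm]
  have hcol1 : ∀ i, M i i1 = if i = i1 then 1 else 0 := by
    intro i
    rw [hM, LinearMap.toMatrix_apply, hb1, hfapp, hTx, hrepr1, Finsupp.single_apply]
    simp only [eq_comm]
  -- transpose of the characteristic matrix
  set N := (charmatrix M)ᵀ with hN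
  have hrow0 : N i0 = (X - C (1:ℂ)) • (Pi.single i0 1 : _ → ℂ[X]) := by
    funext j
    rcases eq_or_ne j i0 with h | h
    · subst h
      rw [hN, transpose_apply, charmatrix_apply_eq, hcol0, if_pos rfl, Pi.smul_apply,
        Pi.single_eq_same, smul_eq_mul, mul_one]
    · rw [hN, transpose_apply, charmatrix_apply_ne _ _ _ h, hcol0, if_neg h, Pi.smul_apply,
        Pi.single_eq_of_ne h, smul_eq_mul, mul_zero, Polynomial.C_0, neg_zero]
  have hrow1 : N i1 = (X - C (1:ℂ)) • (Pi.single i1 1 : _ → ℂ[X]) := by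
    funext j
    rcases eq_or_ne j i1 with h | h
    · subst h
      rw [hN, transpose_apply, charmatrix_apply_eq, hcol1, if_pos rfl, Pi.smul_apply,
        Pi.single_eq_same, smul_eq_mul, mul_one]
    · rw [hN, transpose_apply, charmatrix_apply_ne _ _ _ h, hcol1, if_neg h, Pi.smul_apply,
        Pi.single_eq_of_ne h, smul_eq_mul, mul_zero, Polynomial.C_0, neg_zero]
  have hdvd : (X - C (1:ℂ)) ^ 2 ∣ M.charpoly := by
    have h1 : M.charpoly = N.det := by
      rw [Matrix.charpoly, hN, Matrix.det_transpose]
    set N' := N.updateRow i0 (Pi.single i0 1 : _ → ℂ[X]) with hN'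
    have h2 : N.det = (X - C (1:ℂ)) * N'.det := by
      conv_lhs => rw [← Matrix.updateRow_eq_self N i0, hrow0]
      rw [Matrix.det_updateRow_smul, hN']
    have hN'row1 : N' i1 = (X - C (1:ℂ)) • (Pi.single i1 1 : _ → ℂ[X]) := by
      rw [hN', Matrix.updateRow_ne (Ne.symm hne), hrow1]
    have h3 : N'.det = (X - C (1:ℂ)) *
        (N'.updateRow i1 (Pi.single i1 1 : _ → ℂ[X])).det := by
      conv_lhs => rw [← Matrix.updateRow_eq_self N' i1, hN'row1]
      rw [Matrix.det_updateRow_smul]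
    exact ⟨(N'.updateRow i1 (Pi.single i1 1 : _ → ℂ[X])).det, by rw [h1, h2, h3]; ring⟩
  have hne0 : T.charpoly ≠ 0 := (Matrix.charpoly_monic T).ne_zero
  have h2le : 2 ≤ (Matrix.charpoly T).rootMultiplicity 1 := by
    rw [Polynomial.le_rootMultiplicity_iff hne0]
    rwa [hchar] at hdvd
  omega

lemma mul_vecMulVec_aux {n : ℕ} (M : Matrix (Fin n) (Fin n) ℂ) (a b : Fin n → ℂ) :
    M * Matrix.vecMulVec a b = Matrix.vecMulVec (M.mulVec a) b := by
  ext i j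
  simp [Matrix.mul_apply, Matrix.vecMulVec_apply, Matrix.mulVec, dotProduct,
    Finset.sum_mul, mul_assoc]

/-- If 1 is an eigenvalue of `T` of algebraic multiplicity 1 (as a root of the
characteristic polynomial), `π ≠ 0` with `Tπ = π`, `e ≠ 0` with `e^*T = e^*`, `e^*π ≠ 0`,
then for any `t, u` with `e^*t ≠ 0` and `u^*π ≠ 0`, the matrix `I − T + t u^*` is invertible
and its inverse is a generalized inverse of `I − T`. -/
theorem g_inverse_of_perturbation {n : ℕ} (T : Matrix (Fin n) (Fin n) ℂ)
    (hroot : (Matrix.charpoly T).IsRoot 1)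
    (hmult : (Matrix.charpoly T).rootMultiplicity 1 = 1)
    (π : Fin n → ℂ) (hπ0 : π ≠ 0) (hTπ : T.mulVec π = π)
    (e : Fin n → ℂ) (he0 : e ≠ 0) (heT : Matrix.vecMul (star e) T = star e)
    (heπ : dotProduct (star e) π ≠ 0)
    (t u : Fin n → ℂ)
    (het : dotProduct (star e) t ≠ 0)
    (huπ : dotProduct (star u) π ≠ 0) :
    IsUnit (1 - T + Matrix.vecMulVec t (star u)) ∧
      (1 - T) * (1 - T + Matrix.vecMulVec t (star u))⁻¹ * (1 - T) = 1 - T := by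
  set A := (1 : Matrix (Fin n) (Fin n) ℂ) - T with hA
  set B := A + Matrix.vecMulVec t (star u) with hB
  have hAπ : A.mulVec π = 0 := by
    rw [hA, Matrix.sub_mulVec, Matrix.one_mulVec, hTπ, sub_self]
  have heA : Matrix.vecMul (star e) A = 0 := by
    rw [hA, Matrix.vecMul_sub, Matrix.vecMul_one, heT, sub_self]
  have hrank1 : ∀ x, (Matrix.vecMulVec t (star u)).mulVec x
      = (dotProduct (star u) x) • t := by
    intro x
    funext i
    simp only [Matrix.mulVec, Matrix.vecMulVec_apply, dotProduct, Finset.sum_mul,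
      Pi.smul_apply, smul_eq_mul]
    exact Finset.sum_congr rfl fun k _ => by ring
  -- B is injective on vectors
  have hinj : Function.Injective B.mulVec := by
    rw [← Matrix.mulVecLin_apply] at *
    have hker : ∀ x, B.mulVec x = 0 → x = 0 := by
      intro x hx
      have hud : dotProduct (star u) x = 0 := by
        have h1 : dotProduct (star e) (B.mulVec x) = 0 := by rw [hx]; simp
        rw [hB, Matrix.add_mulVec, hrank1, dotProduct_add, dotProduct_mulVec,
          heA, zero_dotProduct, dotProduct_smul, zero_add,
          smul_eq_mul, mul_eq_zero] at h1
        tauto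
      have hAx : A.mulVec x = 0 := by
        have := hx
        rw [hB, Matrix.add_mulVec, hrank1, hud, zero_smul, add_zero] at this
        exact this
      have hTx : T.mulVec x = x := by
        rw [hA, Matrix.sub_mulVec, Matrix.one_mulVec, sub_eq_zero] at hAx
        exact hAx.symm
      obtain ⟨c, rfl⟩ := eigvec_unique_aux T hmult hπ0 hTπ hTx
      have : c * dotProduct (star u) π = 0 := by
        rw [dotProduct_smul, smul_eq_mul] at hud
        exact hud
      rcases mul_eq_zero.mp this with h | h
      · rw [h, zero_smul]
      · exact absurd h huπ
    intro x y hxy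
    have : B.mulVec (x - y) = 0 := by
      rw [Matrix.mulVec_sub, hxy, sub_self]
    have := hker _ this
    exact sub_eq_zero.mp this
  have hunit : IsUnit B := Matrix.mulVec_injective_iff_isUnit.mp hinj
  refine ⟨hunit, ?_⟩
  have hdet : IsUnit B.det := (Matrix.isUnit_iff_isUnit_det B).mp hunit
  have hBinv : B⁻¹ * B = 1 := Matrix.nonsing_inv_mul B hdet
  -- B⁻¹ t = (u*π)⁻¹ • π
  have hBt : B⁻¹.mulVec t = (dotProduct (star u) π)⁻¹ • π := by
    have h1 : B.mulVec ((dotProduct (star u) π)⁻¹ • π) = t := by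
      rw [hB, Matrix.add_mulVec, Matrix.mulVec_smul, hAπ, smul_zero, zero_add,
        Matrix.mulVec_smul, hrank1]
      rw [smul_smul, inv_mul_cancel₀ huπ, one_smul]
    calc B⁻¹.mulVec t = B⁻¹.mulVec (B.mulVec ((dotProduct (star u) π)⁻¹ • π)) := by
          rw [h1]
      _ = (B⁻¹ * B).mulVec ((dotProduct (star u) π)⁻¹ • π) := by
          rw [Matrix.mulVec_mulVec]
      _ = (dotProduct (star u) π)⁻¹ • π := by rw [hBinv, Matrix.one_mulVec]
  have hGA : B⁻¹ * A = 1 - Matrix.vecMulVec (B⁻¹.mulVec t) (star u) := by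
    have : A = B - Matrix.vecMulVec t (star u) := by rw [hB, add_sub_cancel_right]
    rw [this, Matrix.mul_sub, hBinv, mul_vecMulVec_aux]
  rw [Matrix.mul_assoc, hGA, Matrix.mul_sub, mul_one, mul_vecMulVec_aux, hBt]
  have : A.mulVec ((dotProduct (star u) π)⁻¹ • π) = 0 := by
    rw [Matrix.mulVec_smul, hAπ, smul_zero]
  rw [this]
  have : Matrix.vecMulVec (0 : Fin n → ℂ) (star u) = 0 := by
    ext i j; simp [Matrix.vecMulVec_apply]
  rw [this, sub_zero]
end

section
/- Let T be an n×n complex matrix such that 1 is an eigenvalue of T whose algebraic multiplicity as a root of the characteristic polynomial of T equals 1, let π ∈ ℂ^n be nonzero with Tπ = π, let e ∈ ℂ^n be nonzero with e^*T = e^*, and assume e^*π ≠ 0. Then the adjugate matrix of I − T is a nonzero multiple of the rank-one matrix π e^*: there exists a scalar c ∈ ℂ with c ≠ 0 such that adj(I − T) = c · π e^*. -/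
open Matrix Polynomial

/-- If some entry of the adjugate of `A` is nonzero, then the kernel of `A` is spanned by any
single nonzero kernel vector. -/
lemma aux_ker {m : ℕ} (A : Matrix (Fin (m+1)) (Fin (m+1)) ℂ)
    (i0 j0 : Fin (m+1)) (hne : Matrix.adjugate A i0 j0 ≠ 0)
    (v : Fin (m+1) → ℂ) (hv : v ≠ 0) (hAv : A.mulVec v = 0)
    (u : Fin (m+1) → ℂ) (hAu : A.mulVec u = 0) : ∃ c : ℂ, u = c • v := by
  classical
  set S := A.submatrix j0.succAbove i0.succAbove with hS
  have hSdet : S.det ≠ 0 := by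
    intro h
    rw [Matrix.adjugate_fin_succ_eq_det_submatrix] at hne
    rw [← hS, h, mul_zero] at hne
    exact hne rfl
  have hw : LinearIndependent ℂ (fun j : Fin m => fun i => A i (i0.succAbove j)) := by
    rw [Fintype.linearIndependent_iff]
    intro c hc j
    by_contra hcj
    have h1 : S.mulVec c = 0 := by
      funext i
      have h2 := congrFun hc (j0.succAbove i)
      simp only [Finset.sum_apply, Pi.smul_apply, smul_eq_mul, Pi.zero_apply] at h2
      simpa [Matrix.mulVec, dotProduct, hS, Matrix.submatrix_apply, mul_comm] using h2
    exact hSdet (Matrix.exists_mulVec_eq_zero_iff.mp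
      ⟨c, fun h => hcj (by rw [h]; rfl), h1⟩)
  have hmem : ∀ j : Fin m, (fun i => A i (i0.succAbove j)) ∈ LinearMap.range A.mulVecLin := by
    intro j
    refine ⟨Pi.single (i0.succAbove j) 1, ?_⟩
    funext i
    simp [Matrix.mulVecLin_apply, Matrix.mulVec_single]
  have hli2 : LinearIndependent ℂ
      (fun j : Fin m => (⟨_, hmem j⟩ : LinearMap.range A.mulVecLin)) := by
    apply LinearIndependent.of_comp (LinearMap.range A.mulVecLin).subtype
    exact hw
  have hm_le : m ≤ Module.finrank ℂ (LinearMap.range A.mulVecLin) := by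
    simpa using hli2.fintype_card_le_finrank
  have hrn := LinearMap.finrank_range_add_finrank_ker A.mulVecLin
  rw [Module.finrank_fintype_fun_eq_card, Fintype.card_fin] at hrn
  have hker_le : Module.finrank ℂ (LinearMap.ker A.mulVecLin) ≤ 1 := by omega
  have hvmem : v ∈ LinearMap.ker A.mulVecLin := by
    rw [LinearMap.mem_ker]; simpa [Matrix.mulVecLin_apply] using hAv
  have humem : u ∈ LinearMap.ker A.mulVecLin := by
    rw [LinearMap.mem_ker]; simpa [Matrix.mulVecLin_apply] using hAu
  have hspan : Submodule.span ℂ {v} = LinearMap.ker A.mulVecLin := by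
    apply Submodule.eq_of_le_of_finrank_le
    · rw [Submodule.span_le, Set.singleton_subset_iff]; exact hvmem
    · rw [finrank_span_singleton hv]; exact hker_le
  rw [← hspan] at humem
  obtain ⟨c, hc⟩ := Submodule.mem_span_singleton.mp humem
  exact ⟨c, hc.symm⟩

/-- Under the same hypotheses, the adjugate of `I − T` is a nonzero scalar
multiple of the rank-one matrix `π e^*`. -/
theorem adjugate_eq_smul_rank_one {n : ℕ} (T : Matrix (Fin n) (Fin n) ℂ)
    (hroot : (Matrix.charpoly T).IsRoot 1)
    (hmult : (Matrix.charpoly T).rootMultiplicity 1 = 1)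
    (π : Fin n → ℂ) (hπ0 : π ≠ 0) (hTπ : T.mulVec π = π)
    (e : Fin n → ℂ) (he0 : e ≠ 0) (heT : Matrix.vecMul (star e) T = star e)
    (heπ : dotProduct (star e) π ≠ 0) :
    ∃ c : ℂ, c ≠ 0 ∧ Matrix.adjugate (1 - T) = c • Matrix.vecMulVec π (star e) := by
  classical
  cases n with
  | zero => exact absurd (_root_.funext fun i => Fin.elim0 i) hπ0
  | succ m =>
  -- evaluation of the characteristic matrix at 1
  have hcm : (Matrix.charmatrix T).map (Polynomial.evalRingHom (1:ℂ)) = 1 - T := by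
    ext i j
    by_cases h : i = j
    · subst h
      simp [Matrix.charmatrix_apply_eq, Matrix.map_apply, Matrix.sub_apply, Matrix.one_apply]
    · simp [Matrix.charmatrix_apply_ne _ _ _ h, Matrix.map_apply, Matrix.sub_apply,
        Matrix.one_apply_ne h]
  have hdet : (1 - T).det = 0 := by
    have h := (Polynomial.evalRingHom (1:ℂ)).map_det (Matrix.charmatrix T)
    rw [RingHom.mapMatrix_apply, hcm] at h
    rw [← h]
    simpa [Matrix.charpoly] using hroot
  -- the adjugate of 1 - T is nonzero
  have hP0 : Matrix.charpoly T ≠ 0 := (Matrix.charpoly_monic T).ne_zero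
  have hfac : (X - C (1:ℂ)) * (Matrix.charpoly T /ₘ (X - C 1)) = Matrix.charpoly T := by
    have h := Polynomial.pow_mul_divByMonic_rootMultiplicity_eq (Matrix.charpoly T) 1
    rwa [hmult, pow_one] at h
  have hg1 : (Matrix.charpoly T /ₘ (X - C 1)).eval 1 ≠ 0 := by
    have h := Polynomial.eval_divByMonic_pow_rootMultiplicity_ne_zero 1 hP0
    rwa [hmult, pow_one] at h
  set g := Matrix.charpoly T /ₘ (X - C (1:ℂ)) with hgdef
  have hadj : Matrix.adjugate (1 - T) ≠ 0 := by
    intro h0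
    set B := Matrix.adjugate (Matrix.charmatrix T) with hB
    have hmap : B.map (Polynomial.evalRingHom (1:ℂ)) = 0 := by
      have h := RingHom.map_adjugate (Polynomial.evalRingHom (1:ℂ)) (Matrix.charmatrix T)
      rw [RingHom.mapMatrix_apply, RingHom.mapMatrix_apply, hcm, h0] at h
      exact h
    have hdvd : ∀ i j, (X - C (1:ℂ)) ∣ B i j := by
      intro i j
      apply Polynomial.dvd_iff_isRoot.mpr
      have h := congrFun (congrFun hmap i) j
      simpa [Matrix.map_apply] using h
    set B₁ := Matrix.of (fun i j => B i j /ₘ (X - C (1:ℂ))) with hB₁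
    have hB1 : ∀ i j, (X - C (1:ℂ)) * B₁ i j = B i j := by
      intro i j
      obtain ⟨q, hq⟩ := hdvd i j
      rw [hB₁]
      simp only [Matrix.of_apply]
      rw [hq, Polynomial.mul_divByMonic_cancel_left q (Polynomial.monic_X_sub_C 1)]
    have hmulB : Matrix.charmatrix T * B = Matrix.charpoly T • 1 :=
      Matrix.mul_adjugate _
    have key : Matrix.charmatrix T * B₁ = g • 1 := by
      rw [← Matrix.ext_iff]
      intro i j
      apply mul_left_cancel₀ (Polynomial.X_sub_C_ne_zero (1:ℂ))
      have h1 : (Matrix.charmatrix T * B) i j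
          = (Matrix.charpoly T • (1 : Matrix (Fin (m+1)) (Fin (m+1)) ℂ[X])) i j := by
        rw [hmulB]
      calc (X - C 1) * (Matrix.charmatrix T * B₁) i j
          = ∑ k, Matrix.charmatrix T i k * ((X - C 1) * B₁ k j) := by
            simp [Matrix.mul_apply, Finset.mul_sum, mul_left_comm]
        _ = (Matrix.charmatrix T * B) i j := by
            simp only [hB1, Matrix.mul_apply]
        _ = (Matrix.charpoly T • (1 : Matrix (Fin (m+1)) (Fin (m+1)) ℂ[X])) i j := h1
        _ = (X - C 1) * ((g • (1 : Matrix (Fin (m+1)) (Fin (m+1)) ℂ[X])) i j) := by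
            simp only [Matrix.smul_apply, smul_eq_mul, ← hfac]
            ring
    have hdetid := congrArg Matrix.det key
    rw [Matrix.det_mul, Matrix.det_smul, Matrix.det_one, mul_one, Fintype.card_fin] at hdetid
    have heval := congrArg (Polynomial.eval (1:ℂ)) hdetid
    rw [Polynomial.eval_mul, Polynomial.eval_pow] at heval
    have hch : (Matrix.charmatrix T).det.eval 1 = 0 := hroot
    rw [hch, zero_mul] at heval
    exact pow_ne_zero _ hg1 heval.symm
  -- kernel facts
  have hAπ : (1 - T).mulVec π = 0 := by
    rw [Matrix.sub_mulVec, Matrix.one_mulVec, hTπ, sub_self]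
  have hse : star e ≠ 0 := fun h => he0 (by simpa using congrArg star h)
  have hAe : (1 - T)ᵀ.mulVec (star e) = 0 := by
    rw [Matrix.mulVec_transpose, Matrix.vecMul_sub, Matrix.vecMul_one, heT, sub_self]
  obtain ⟨i0, j0, h00⟩ : ∃ i0 j0, Matrix.adjugate (1 - T) i0 j0 ≠ 0 := by
    by_contra h
    push_neg at h
    exact hadj (by ext i j; exact h i j)
  have hA0 : (1 - T) * Matrix.adjugate (1 - T) = 0 := by
    rw [Matrix.mul_adjugate, hdet, zero_smul]
  have hA0' : Matrix.adjugate (1 - T) * (1 - T) = 0 := by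
    rw [Matrix.adjugate_mul, hdet, zero_smul]
  have hcols : ∀ j, ∃ c : ℂ, (fun i => Matrix.adjugate (1 - T) i j) = c • π := by
    intro j
    apply aux_ker (1 - T) i0 j0 h00 π hπ0 hAπ
    funext i
    have h := congrFun (congrFun hA0 i) j
    simpa [Matrix.mul_apply, Matrix.mulVec, dotProduct] using h
  have hrows : ∀ i, ∃ d : ℂ, (fun j => Matrix.adjugate (1 - T) i j) = d • star e := by
    intro i
    have hne' : Matrix.adjugate ((1 - T)ᵀ) j0 i0 ≠ 0 := by
      rw [← Matrix.adjugate_transpose]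
      exact h00
    apply aux_ker ((1 - T)ᵀ) j0 i0 hne' (star e) hse hAe
    funext j
    have h := congrFun (congrFun hA0' i) j
    simpa [Matrix.mul_apply, Matrix.mulVec, dotProduct, Matrix.transpose_apply,
      mul_comm] using h
  choose cc hc using hcols
  choose dd hd using hrows
  have hπi0 : π i0 ≠ 0 := by
    intro h
    apply h00
    have h1 := congrFun (hc j0) i0
    simp only [Pi.smul_apply, smul_eq_mul] at h1
    rw [h1, h, mul_zero]
  have hmat : Matrix.adjugate (1 - T) = (dd i0 / π i0) • Matrix.vecMulVec π (star e) := by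
    ext i j
    have h1 : Matrix.adjugate (1 - T) i j = cc j * π i := by
      have := congrFun (hc j) i; simpa using this
    have h2 : Matrix.adjugate (1 - T) i0 j = dd i0 * star e j := by
      have := congrFun (hd i0) j; simpa using this
    have h3 : Matrix.adjugate (1 - T) i0 j = cc j * π i0 := by
      have := congrFun (hc j) i0; simpa using this
    have h4 : cc j * π i0 = dd i0 * star e j := h3.symm.trans h2
    rw [Matrix.smul_apply, Matrix.vecMulVec_apply, h1]
    rw [smul_eq_mul, div_mul_eq_mul_div, eq_div_iff hπi0]
    calc cc j * π i * π i0 = (cc j * π i0) * π i := by ring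
      _ = (dd i0 * star e j) * π i := by rw [h4]
      _ = dd i0 * (π i * star e j) := by ring
  refine ⟨dd i0 / π i0, fun h => ?_, hmat⟩
  apply h00
  rw [hmat, h, zero_smul]
  rfl
end

section
/- Let T be an n×n complex matrix such that 1 is an eigenvalue of T whose algebraic multiplicity as a root of the characteristic polynomial of T equals 1, let π ∈ ℂ^n be nonzero with Tπ = π, let e ∈ ℂ^n be nonzero with e^*T = e^*, and assume e^*π ≠ 0. Then there exists a scalar c ∈ ℂ with c ≠ 0 such that for ALL vectors t, u ∈ ℂ^n one has det(I − T + t u^*) = c · (u^*π)(e^*t). In particular, I − T + t u^* is invertible if and only if u^*π ≠ 0 and e^*t ≠ 0. -/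
open Matrix Polynomial Finset

theorem detlem_inv {m : Type*} [Fintype m] [DecidableEq m] {K : Type*} [Field K]
    (B : Matrix m m K) (hB : IsUnit B.det) (t v : m → K) :
    (B + vecMulVec t v).det = B.det + v ⬝ᵥ (B.adjugate *ᵥ t) := by
  rw [vecMulVec_eq Unit, det_add_replicateCol_mul_replicateRow hB]
  have h1 : (1 + replicateRow Unit v * B⁻¹ * replicateCol Unit t).det
      = 1 + v ⬝ᵥ (B⁻¹ *ᵥ t) := by
    rw [det_unique]
    rw [Matrix.add_apply, one_apply_eq]
    simp only [mul_apply, dotProduct, mulVec, replicateCol_apply, replicateRow_apply, Finset.sum_mul, Finset.mul_sum]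
    rw [Finset.sum_comm]
    ring_nf
  rw [h1, mul_add, mul_one]
  congr 1
  have h2 : B.det • B⁻¹ = B.adjugate := by
    rw [Matrix.nonsing_inv_apply _ hB, smul_smul, IsUnit.mul_val_inv, one_smul]
  rw [← h2, smul_mulVec, dotProduct_smul, smul_eq_mul]

theorem charmatrix_map_eval {m : Type*} [Fintype m] [DecidableEq m] {K : Type*} [Field K]
    (B : Matrix m m K) (x : K) : (charmatrix B).map (eval x) = x • (1 : Matrix m m K) - B := by
  ext i j
  by_cases h : i = j <;>
    simp [charmatrix_apply, h, diagonal_apply, one_apply, Matrix.sub_apply, Matrix.smul_apply]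

theorem detlem {m : Type*} [Fintype m] [DecidableEq m] (A : Matrix m m ℂ) (t v : m → ℂ) :
    (A + vecMulVec t v).det = A.det + v ⬝ᵥ (A.adjugate *ᵥ t) := by
  set M : Matrix m m ℂ[X] := charmatrix (-A) with hMdef
  have hM : ∀ x : ℂ, M.map (eval x) = x • (1 : Matrix m m ℂ) + A := by
    intro x; rw [hMdef, charmatrix_map_eval, sub_neg_eq_add]
  set P₁ : ℂ[X] := (M + (vecMulVec t v).map C).det with hP₁def
  set P₂ : ℂ[X] := M.det + (fun i => C (v i)) ⬝ᵥ (M.adjugate *ᵥ fun i => C (t i)) with hP₂def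
  have hmapvv : ∀ x : ℂ, ((vecMulVec t v).map C).map (eval x) = vecMulVec t v := by
    intro x
    ext i j
    simp [vecMulVec_apply]
  have hE₁ : ∀ x : ℂ, P₁.eval x = ((x • 1 + A) + vecMulVec t v).det := by
    intro x
    rw [hP₁def, ← coe_evalRingHom, RingHom.map_det, RingHom.mapMatrix_apply, Matrix.map_add (f := ⇑(evalRingHom x)) (by simp),
      coe_evalRingHom, hM, hmapvv]
  have hE₂ : ∀ x : ℂ, P₂.eval x
      = (x • 1 + A).det + v ⬝ᵥ ((x • 1 + A).adjugate *ᵥ t) := by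
    intro x
    rw [hP₂def, eval_add, ← coe_evalRingHom, RingHom.map_det]
    congr 1
    · rw [RingHom.mapMatrix_apply, coe_evalRingHom, hM]
    · rw [dotProduct, map_sum]
      rw [dotProduct]
      apply Finset.sum_congr rfl
      intro i _
      rw [_root_.map_mul, coe_evalRingHom, eval_C]
      congr 1
      rw [mulVec, dotProduct, ← coe_evalRingHom, map_sum]
      rw [mulVec, dotProduct]
      apply Finset.sum_congr rfl
      intro j _
      rw [_root_.map_mul]
      have h := RingHom.map_adjugate (evalRingHom x) M
      rw [RingHom.mapMatrix_apply, RingHom.mapMatrix_apply, coe_evalRingHom, hM] at h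
      rw [← h]
      simp [Matrix.map_apply]
  have hD : M.det = (-A).charpoly := rfl
  have hDne : M.det ≠ 0 := by rw [hD]; exact (charpoly_monic _).ne_zero
  have hfin : {x : ℂ | (M.det).IsRoot x}.Finite := Polynomial.finite_setOf_isRoot hDne
  have heq : P₁ = P₂ := by
    rw [← sub_eq_zero]
    apply eq_zero_of_infinite_isRoot
    apply Set.Infinite.mono (s := {x : ℂ | (M.det).IsRoot x}ᶜ)
    · intro x hx
      simp only [Set.mem_compl_iff, Set.mem_setOf_eq, IsRoot.def] at hx
      have hunit : IsUnit (x • (1 : Matrix m m ℂ) + A).det := by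
        rw [isUnit_iff_ne_zero]
        intro h0
        apply hx
        rw [← coe_evalRingHom, RingHom.map_det, RingHom.mapMatrix_apply, coe_evalRingHom, hM, h0]
      simp only [Set.mem_setOf_eq, IsRoot.def, eval_sub, sub_eq_zero, hE₁, hE₂]
      exact detlem_inv _ hunit t v
    · exact hfin.infinite_compl
  have h0 := hE₁ 0
  rw [heq, hE₂ 0] at h0
  simpa using h0.symm

noncomputable def qaux (p : ℂ[X]) : ℂ[X] :=
  ∑ k ∈ Finset.range (p.natDegree + 1), C (p.coeff k) * ∑ i ∈ Finset.range k, X ^ i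

theorem qaux_mul (p : ℂ[X]) : (X - C 1) * qaux p = p - C (p.eval 1) := by
  rw [qaux, Finset.mul_sum]
  have h1 : ∀ k, (X - C 1) * (C (p.coeff k) * ∑ i ∈ Finset.range k, X ^ i)
      = C (p.coeff k) * X ^ k - C (p.coeff k) := by
    intro k
    rw [_root_.map_one, mul_left_comm, mul_geom_sum, mul_sub, mul_one]
  rw [Finset.sum_congr rfl (fun k _ => h1 k), Finset.sum_sub_distrib,
    ← Polynomial.as_sum_range_C_mul_X_pow]
  congr 1
  rw [eval_eq_sum_range, map_sum]
  apply Finset.sum_congr rfl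
  intro k _
  rw [one_pow, mul_one]

theorem qaux_eval_ne (p : ℂ[X]) (hp : p ≠ 0) (hroot : p.IsRoot 1)
    (hmult : p.rootMultiplicity 1 = 1) : (qaux p).eval 1 ≠ 0 := by
  have hfac : (X - C 1) * qaux p = p := by
    rw [qaux_mul, hroot.eq_zero, map_zero, sub_zero]
  have hq0 : qaux p ≠ 0 := by
    intro h; rw [h, mul_zero] at hfac; exact hp hfac.symm
  have hXC : (X - C (1:ℂ)) ≠ 0 := X_sub_C_ne_zero 1
  have := Polynomial.rootMultiplicity_mul (p := X - C (1:ℂ)) (q := qaux p)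
    (by rw [hfac]; exact hp) (x := 1)
  rw [hfac, hmult, rootMultiplicity_X_sub_C_self] at this
  have h0 : (qaux p).rootMultiplicity 1 = 0 := by omega
  intro hev
  have : 0 < (qaux p).rootMultiplicity 1 :=
    (Polynomial.rootMultiplicity_pos hq0).mpr hev
  omega

theorem adjugate_one_sub {m : Type*} [Fintype m] [DecidableEq m] (T : Matrix m m ℂ) :
    adjugate (1 - T) = aeval T (qaux T.charpoly) := by
  classical
  set p : ℂ[X] := T.charpoly with hp
  set ψ : Matrix m m ℂ →+* Matrix m m ℂ[X] := (C : ℂ →+* ℂ[X]).mapMatrix with hψ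
  have hψs : ∀ (a : ℂ) (M : Matrix m m ℂ), ψ (a • M) = C a • ψ M := by
    intro a M; ext i j
    simp [hψ, Matrix.smul_apply, smul_eq_mul]
  set W : Matrix m m ℂ[X] := charmatrix T with hW
  set G : Matrix m m ℂ[X] :=
    ∑ k ∈ Finset.range (p.natDegree + 1), ∑ i ∈ Finset.range k,
      (C (p.coeff k) * X ^ (k - 1 - i)) • ψ (T ^ i) with hG
  -- step (a): W * G = p • 1
  have hkey : ∀ i : ℕ, W * ψ (T ^ i) = (X : ℂ[X]) • ψ (T ^ i) - ψ (T ^ (i + 1)) := by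
    intro i
    rw [hW, charmatrix, sub_mul, ← hψ, ← _root_.map_mul ψ, ← pow_succ']
    congr 1
    rw [scalar_apply, ← smul_eq_diagonal_mul]
  have htel : ∀ k : ℕ, W * (∑ i ∈ Finset.range k, (C (p.coeff k) * X ^ (k - 1 - i)) • ψ (T ^ i))
      = C (p.coeff k) • ((X : ℂ[X]) ^ k • (1 : Matrix m m ℂ[X]) - ψ (T ^ k)) := by
    intro k
    rw [Finset.mul_sum]
    have hterm : ∀ i ∈ Finset.range k,
        W * ((C (p.coeff k) * X ^ (k - 1 - i)) • ψ (T ^ i))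
        = C (p.coeff k) • ((fun j => (X : ℂ[X]) ^ (k - j) • ψ (T ^ j)) i
            - (fun j => (X : ℂ[X]) ^ (k - j) • ψ (T ^ j)) (i + 1)) := by
      intro i hi
      rw [Finset.mem_range] at hi
      simp only []
      rw [Matrix.mul_smul, hkey i, smul_sub, smul_smul, smul_sub, smul_smul, smul_smul]
      congr 2
      · rw [mul_assoc, ← pow_succ]
        congr 2
        omega
      · congr 2
        omega
    rw [Finset.sum_congr rfl hterm, ← Finset.smul_sum, Finset.sum_range_sub']
    simp [pow_zero, Nat.sub_zero, Nat.sub_self, _root_.map_one]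
  have hWG : W * G = p • (1 : Matrix m m ℂ[X]) := by
    rw [hG, Finset.mul_sum, Finset.sum_congr rfl (fun k _ => htel k)]
    have hsplit : ∑ k ∈ Finset.range (p.natDegree + 1),
        C (p.coeff k) • ((X : ℂ[X]) ^ k • (1 : Matrix m m ℂ[X]) - ψ (T ^ k))
        = (∑ k ∈ Finset.range (p.natDegree + 1), C (p.coeff k) * X ^ k) • (1 : Matrix m m ℂ[X])
          - ψ (∑ k ∈ Finset.range (p.natDegree + 1), p.coeff k • T ^ k) := by
      rw [map_sum ψ, Finset.sum_smul, ← Finset.sum_sub_distrib]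
      apply Finset.sum_congr rfl
      intro k _
      rw [smul_sub, hψs, smul_smul]
    rw [hsplit, ← Polynomial.as_sum_range_C_mul_X_pow, ← aeval_eq_sum_range,
      hp, Matrix.aeval_self_charpoly, map_zero, sub_zero]
  -- step (b): G = adjugate W
  have hGadj : G = adjugate W := by
    have h1 : p • G = p • adjugate W := by
      have hdet : W.det = p := rfl
      have h2 : (adjugate W * W) * G = (adjugate W * W) * adjugate W := by
        rw [Matrix.mul_assoc, hWG, Matrix.mul_assoc, mul_adjugate, hdet]
      rwa [adjugate_mul, hdet, smul_mul, Matrix.one_mul, smul_mul, Matrix.one_mul] at h2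
    have hpne : p ≠ 0 := (Matrix.charpoly_monic T).ne_zero
    refine Matrix.ext fun i j => ?_
    have := congrFun (congrFun (congrArg (fun M => M) h1) i) j
    simp only [Matrix.smul_apply, smul_eq_mul] at this
    exact mul_left_cancel₀ hpne this
  -- step (c): evaluate at 1
  have hφ := congrArg (fun M : Matrix m m ℂ[X] => M.map (eval 1)) hGadj.symm
  have hadjW : (adjugate W).map (eval 1) = adjugate (1 - T) := by
    have h := RingHom.map_adjugate (evalRingHom 1) W
    rw [RingHom.mapMatrix_apply, RingHom.mapMatrix_apply, coe_evalRingHom] at h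
    rw [h]; congr 1
    rw [hW, charmatrix_map_eval, one_smul]
  have hρs : ∀ (q : ℂ[X]) (M : Matrix m m ℂ[X]),
      (q • M).map (eval 1) = q.eval 1 • M.map (eval 1) := by
    intro q M; ext i j; simp [Matrix.map_apply, Matrix.smul_apply, smul_eq_mul]
  have hρψ : ∀ (M : Matrix m m ℂ), (ψ M).map (eval 1) = M := by
    intro M; ext i j; simp [hψ, Matrix.map_apply]
  have hmapsum : ∀ {s : Finset ℕ} (f : ℕ → Matrix m m ℂ[X]),
      (∑ i ∈ s, f i).map (eval 1) = ∑ i ∈ s, (f i).map (eval 1) := by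
    intro s f
    rw [← coe_evalRingHom, ← RingHom.mapMatrix_apply, map_sum]
    simp [RingHom.mapMatrix_apply]
  have hGeval : G.map (eval 1) = aeval T (qaux p) := by
    rw [hG, qaux, map_sum (aeval T), hmapsum]
    apply Finset.sum_congr rfl
    intro k _
    rw [hmapsum, _root_.map_mul (aeval T), aeval_C, map_sum (aeval T)]
    simp only [map_pow, aeval_X]
    rw [Finset.mul_sum]
    apply Finset.sum_congr rfl
    intro i _
    rw [hρs, ← _root_.map_pow ψ, hρψ, eval_mul, eval_C, eval_pow, eval_X, one_pow, mul_one, ← Algebra.smul_def]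
  rw [hadjW] at hφ
  rw [hφ, hGeval]

theorem pow_mulVec_fixed {m : Type*} [Fintype m] [DecidableEq m] (T : Matrix m m ℂ)
    (π : m → ℂ) (h : T *ᵥ π = π) (k : ℕ) : (T ^ k) *ᵥ π = π := by
  induction k with
  | zero => simp
  | succ k ih => rw [pow_succ, ← Matrix.mulVec_mulVec, h, ih]

theorem aeval_mulVec_fixed {m : Type*} [Fintype m] [DecidableEq m] (T : Matrix m m ℂ)
    (π : m → ℂ) (h : T *ᵥ π = π) (r : ℂ[X]) : (aeval T r) *ᵥ π = r.eval 1 • π := by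
  rw [aeval_eq_sum_range, eval_eq_sum_range]
  have : (∑ i ∈ Finset.range (r.natDegree + 1), r.coeff i • T ^ i) *ᵥ π
      = ∑ i ∈ Finset.range (r.natDegree + 1), r.coeff i • ((T ^ i) *ᵥ π) := by
    ext j
    simp [Matrix.mulVec, dotProduct, Finset.sum_apply, Matrix.sum_apply,
      Matrix.smul_apply, Finset.sum_mul, smul_eq_mul]
    rw [Finset.sum_comm]
    apply Finset.sum_congr rfl
    intro k _
    rw [Finset.mul_sum]
    apply Finset.sum_congr rfl
    intro l _
    ring
  rw [this, Finset.sum_smul]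
  apply Finset.sum_congr rfl
  intro i _
  rw [pow_mulVec_fixed T π h, one_pow, mul_one]

theorem aeval_transpose {m : Type*} [Fintype m] [DecidableEq m] (T : Matrix m m ℂ)
    (r : ℂ[X]) : (aeval T r)ᵀ = aeval Tᵀ r := by
  rw [aeval_eq_sum_range, aeval_eq_sum_range, transpose_sum]
  apply Finset.sum_congr rfl
  intro i _
  rw [transpose_smul, transpose_pow]

theorem ker_subset_span {m : Type*} [Fintype m] [DecidableEq m] (A : Matrix m m ℂ)
    (hadj : adjugate A ≠ 0) (π : m → ℂ) (hπ0 : π ≠ 0) (hπ : A *ᵥ π = 0)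
    (x : m → ℂ) (hx : A *ᵥ x = 0) : ∃ d : ℂ, x = d • π := by
  have hij : ∃ i j, adjugate A i j ≠ 0 := by
    by_contra h
    push_neg at h
    exact hadj (Matrix.ext fun i j => h i j)
  obtain ⟨i, j, hij⟩ := hij
  set M := A.updateRow j (Pi.single i 1) with hM
  have hdet : M.det ≠ 0 := by rwa [adjugate_apply] at hij
  have hker : ∀ y : m → ℂ, A *ᵥ y = 0 → M *ᵥ y = Pi.single j (y i) := by
    intro y hy
    ext k
    by_cases hk : k = j
    · subst hk
      simp [hM, Matrix.mulVec, Matrix.updateRow_self, single_dotProduct]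
    · have : (A *ᵥ y) k = 0 := by rw [hy]; rfl
      simp only [Matrix.mulVec, hM] at this ⊢
      rw [Matrix.updateRow_ne hk, this, Pi.single_eq_of_ne hk]
  have hinj : ∀ y z : m → ℂ, M *ᵥ y = M *ᵥ z → y = z := by
    intro y z hyz
    have hu : IsUnit M.det := isUnit_iff_ne_zero.mpr hdet
    have h1 := congrArg (fun w => M⁻¹ *ᵥ w) hyz
    simpa [Matrix.mulVec_mulVec, Matrix.nonsing_inv_mul M hu] using h1
  have hπi : π i ≠ 0 := by
    intro h0
    apply hπ0
    apply hinj π 0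
    rw [hker π hπ, h0, Matrix.mulVec_zero, Pi.single_zero]
  have key : π i • x = x i • π := by
    apply hinj
    rw [Matrix.mulVec_smul, Matrix.mulVec_smul, hker x hx, hker π hπ]
    ext k
    by_cases hk : k = j <;> simp [Pi.single_apply, hk, mul_comm]
  refine ⟨x i / π i, ?_⟩
  have := congrArg (fun w => (π i)⁻¹ • w) key
  simpa [smul_smul, inv_mul_cancel₀ hπi, div_eq_mul_inv, mul_comm] using this

/-- Under the same hypotheses, there is a nonzero scalar `c` such that for all
vectors `t, u` one has `det(I − T + t u^*) = c (u^*π)(e^*t)`; in particular `I − T + t u^*`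
is invertible iff `u^*π ≠ 0` and `e^*t ≠ 0`. -/
theorem det_perturbation_formula {n : ℕ} (T : Matrix (Fin n) (Fin n) ℂ)
    (hroot : (Matrix.charpoly T).IsRoot 1)
    (hmult : (Matrix.charpoly T).rootMultiplicity 1 = 1)
    (π : Fin n → ℂ) (hπ0 : π ≠ 0) (hTπ : T.mulVec π = π)
    (e : Fin n → ℂ) (he0 : e ≠ 0) (heT : Matrix.vecMul (star e) T = star e)
    (heπ : dotProduct (star e) π ≠ 0) :
    ∃ c : ℂ, c ≠ 0 ∧
      (∀ t u : Fin n → ℂ,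
        (1 - T + Matrix.vecMulVec t (star u)).det
          = c * (dotProduct (star u) π) * (dotProduct (star e) t)) ∧
      (∀ t u : Fin n → ℂ,
        IsUnit (1 - T + Matrix.vecMulVec t (star u)) ↔
          (dotProduct (star u) π ≠ 0 ∧ dotProduct (star e) t ≠ 0)) := by
  classical
  set q : ℂ[X] := qaux T.charpoly with hq
  set A : Matrix (Fin n) (Fin n) ℂ := 1 - T with hA
  have hAπ : A *ᵥ π = 0 := by
    rw [hA, Matrix.sub_mulVec, Matrix.one_mulVec, hTπ, sub_self]
  have heA : star e ᵥ* A = 0 := by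
    rw [hA, Matrix.vecMul_sub, Matrix.vecMul_one, heT, sub_self]
  have hdetA : A.det = 0 := Matrix.exists_mulVec_eq_zero_iff.mp ⟨π, hπ0, hAπ⟩
  have hBdef : adjugate A = aeval T q := adjugate_one_sub T
  have hq1 : q.eval 1 ≠ 0 :=
    qaux_eval_ne T.charpoly (Matrix.charpoly_monic T).ne_zero hroot hmult
  have hBπ : adjugate A *ᵥ π = q.eval 1 • π := by
    rw [hBdef]; exact aeval_mulVec_fixed T π hTπ q
  have hB0 : adjugate A ≠ 0 := by
    intro h
    rw [h, Matrix.zero_mulVec] at hBπ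
    rcases smul_eq_zero.mp hBπ.symm with h1 | h1
    · exact hq1 h1
    · exact hπ0 h1
  have hAT : adjugate Aᵀ ≠ 0 := by
    rw [← adjugate_transpose]
    intro h
    apply hB0
    have := congrArg Matrix.transpose h
    rwa [transpose_transpose, transpose_zero] at this
  have hstare0 : star e ≠ 0 := fun h => he0 (by simpa using congrArg star h)
  have hATe : Aᵀ *ᵥ star e = 0 := by rw [Matrix.mulVec_transpose, heA]
  have hker : ∀ x, A *ᵥ x = 0 → ∃ d : ℂ, x = d • π := ker_subset_span A hB0 π hπ0 hAπ
  have hkerT : ∀ y, Aᵀ *ᵥ y = 0 → ∃ d : ℂ, y = d • star e :=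
    ker_subset_span Aᵀ hAT (star e) hstare0 hATe
  obtain ⟨i₀, hi₀⟩ := Function.ne_iff.mp hπ0
  simp only [Pi.zero_apply] at hi₀
  have hAB : A * adjugate A = 0 := by rw [mul_adjugate, hdetA, zero_smul]
  have hBA : adjugate A * A = 0 := by rw [adjugate_mul, hdetA, zero_smul]
  set w : Fin n → ℂ := fun j => (π i₀)⁻¹ * adjugate A i₀ j with hw
  have hcol : ∀ j i, adjugate A i j = π i * w j := by
    intro j
    obtain ⟨d, hd⟩ := hker (fun i => adjugate A i j) (by
      ext k
      have h0 : (A * adjugate A) k j = 0 := by rw [hAB]; rfl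
      rw [Matrix.mul_apply] at h0
      simpa [Matrix.mulVec, dotProduct] using h0)
    intro i
    have h1 : adjugate A i j = d * π i := by
      have := congrFun hd i; simpa [smul_eq_mul] using this
    have h2 : adjugate A i₀ j = d * π i₀ := by
      have := congrFun hd i₀; simpa [smul_eq_mul] using this
    rw [hw]
    simp only []
    rw [h1, h2]
    field_simp
  have hwA : w ᵥ* A = 0 := by
    ext j
    have h1 : (adjugate A * A) i₀ j = 0 := by rw [hBA]; rfl
    rw [Matrix.mul_apply] at h1
    have h2 : ∑ k, adjugate A i₀ k * A k j = π i₀ * ∑ k, w k * A k j := by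
      rw [Finset.mul_sum]
      apply Finset.sum_congr rfl
      intro k _
      rw [hcol k i₀]; ring
    rw [h2] at h1
    rcases mul_eq_zero.mp h1 with h3 | h3
    · exact absurd h3 hi₀
    · simpa [Matrix.vecMul, dotProduct] using h3
  obtain ⟨d, hd⟩ := hkerT w (by rw [Matrix.mulVec_transpose, hwA])
  have hwj : ∀ j, w j = d * star e j := by
    intro j; have := congrFun hd j; simpa [smul_eq_mul] using this
  have hd0 : d ≠ 0 := by
    intro h0
    apply hB0
    ext i j
    rw [hcol j i, hwj j, h0]
    simp
  have hform : ∀ t u : Fin n → ℂ,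
      (A + vecMulVec t (star u)).det = d * (star u ⬝ᵥ π) * (star e ⬝ᵥ t) := by
    intro t u
    rw [detlem A t (star u), hdetA, zero_add]
    have hmv : adjugate A *ᵥ t = (d * (star e ⬝ᵥ t)) • π := by
      ext i
      show ∑ j, adjugate A i j * t j = _
      calc ∑ j, adjugate A i j * t j
          = ∑ j, (π i * d) * (star e j * t j) := by
            apply Finset.sum_congr rfl
            intro j _
            rw [hcol j i, hwj j]; ring
        _ = (π i * d) * ∑ j, star e j * t j := by rw [← Finset.mul_sum]
        _ = (d * (star e ⬝ᵥ t)) * π i := by rw [dotProduct]; ring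
    rw [hmv, dotProduct_smul, smul_eq_mul]
    ring
  refine ⟨d, hd0, fun t u => hform t u, fun t u => ?_⟩
  rw [Matrix.isUnit_iff_isUnit_det, isUnit_iff_ne_zero, hform t u]
  constructor
  · intro h
    constructor
    · intro h1; exact h (by rw [h1]; ring)
    · intro h1; exact h (by rw [h1]; ring)
  · rintro ⟨h1, h2⟩
    exact mul_ne_zero (mul_ne_zero hd0 h1) h2
end

section
/- Let T be an n×n complex matrix and π ∈ ℂ^n a vector with (I − T)π = 0. Let t, u ∈ ℂ^n be vectors with u^*π ≠ 0 and suppose that the matrix M := I − T + t u^* is invertible. Then M^{-1}(I − T) = I − (π u^*)/(u^*π). -/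
open Matrix

lemma aux_mul_vecMulVec {n : ℕ} (A : Matrix (Fin n) (Fin n) ℂ) (x y : Fin n → ℂ) :
    A * Matrix.vecMulVec x y = Matrix.vecMulVec (A.mulVec x) y := by
  ext i j
  simp [Matrix.mul_apply, Matrix.vecMulVec_apply, Matrix.mulVec, dotProduct,
    Finset.sum_mul, mul_assoc]

lemma aux_vecMulVec_mul {n : ℕ} (a b c d : Fin n → ℂ) :
    Matrix.vecMulVec a b * Matrix.vecMulVec c d
      = (dotProduct b c) • Matrix.vecMulVec a d := by
  ext i j
  simp only [Matrix.mul_apply, Matrix.vecMulVec_apply, Matrix.smul_apply, dotProduct,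
    Finset.sum_mul, Finset.mul_sum, smul_eq_mul]
  congr 1; ext k; ring

/-- If `(I − T)π = 0`, `u^*π ≠ 0` and `M := I − T + t u^*` is invertible,
then `M⁻¹(I − T) = I − (π u^*)/(u^*π)`. -/
theorem inv_perturbation_mul_left {n : ℕ} (T : Matrix (Fin n) (Fin n) ℂ)
    (π : Fin n → ℂ) (hπ : (1 - T).mulVec π = 0)
    (t u : Fin n → ℂ) (huπ : dotProduct (star u) π ≠ 0)
    (M : Matrix (Fin n) (Fin n) ℂ) (hMdef : M = 1 - T + Matrix.vecMulVec t (star u))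
    (hM : IsUnit M) :
    M⁻¹ * (1 - T) = 1 - (dotProduct (star u) π)⁻¹ • Matrix.vecMulVec π (star u) := by
  have h : M * (1 - (dotProduct (star u) π)⁻¹ • Matrix.vecMulVec π (star u))
      = 1 - T := by
    rw [hMdef, mul_sub, mul_one, Matrix.mul_smul, add_mul, aux_mul_vecMulVec,
      aux_vecMulVec_mul, hπ]
    have : Matrix.vecMulVec (0 : Fin n → ℂ) (star u) = 0 := by
      ext i j; simp [Matrix.vecMulVec_apply]
    rw [this, zero_add, smul_smul, inv_mul_cancel₀ huπ, one_smul]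
    abel
  haveI := hM.invertible
  calc M⁻¹ * (1 - T) = M⁻¹ * (M * (1 - (dotProduct (star u) π)⁻¹ •
      Matrix.vecMulVec π (star u))) := by rw [h]
    _ = _ := by rw [Matrix.inv_mul_cancel_left_of_invertible]
end

section
/- Let T be an n×n complex matrix and e ∈ ℂ^n a vector with e^*(I − T) = 0. Let t, u ∈ ℂ^n be vectors with e^*t ≠ 0 and suppose that the matrix M := I − T + t u^* is invertible. Then (I − T) M^{-1} = I − (t e^*)/(e^*t). -/
open Matrix

/-- If `e^*(I − T) = 0`, `e^*t ≠ 0` and `M := I − T + t u^*` is invertible,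
then `(I − T) M⁻¹ = I − (t e^*)/(e^*t)`. -/
theorem inv_perturbation_mul_right {n : ℕ} (T : Matrix (Fin n) (Fin n) ℂ)
    (e : Fin n → ℂ) (he : Matrix.vecMul (star e) (1 - T) = 0)
    (t u : Fin n → ℂ) (het : dotProduct (star e) t ≠ 0)
    (M : Matrix (Fin n) (Fin n) ℂ) (hMdef : M = 1 - T + Matrix.vecMulVec t (star u))
    (hM : IsUnit M) :
    (1 - T) * M⁻¹ = 1 - (dotProduct (star e) t)⁻¹ • Matrix.vecMulVec t (star e) := by
  set d := dotProduct (star e) t with hd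
  have h1 : Matrix.vecMul (star e) M = d • star u := by
    rw [hMdef, Matrix.vecMul_add, he, zero_add]
    ext j
    simp [Matrix.vecMul, Matrix.vecMulVec, dotProduct, Finset.sum_mul, mul_assoc, hd]
  have h2 : Matrix.vecMulVec t (star u) = d⁻¹ • (Matrix.vecMulVec t (star e) * M) := by
    ext i j
    have hj := congrFun h1 j
    simp only [Matrix.vecMul, dotProduct, Pi.smul_apply, smul_eq_mul] at hj
    simp only [Matrix.vecMulVec, Matrix.mul_apply, Matrix.smul_apply, Matrix.of_apply,
      smul_eq_mul]
    have : ∑ k, t i * star e k * M k j = t i * ∑ k, star e k * M k j := by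
      rw [Finset.mul_sum]; exact Finset.sum_congr rfl fun k _ => by ring
    rw [this, hj]
    field_simp
  have hinv : M * M⁻¹ = 1 := Matrix.mul_nonsing_inv M (((Matrix.isUnit_iff_isUnit_det M).mp hM))
  have h3 : (1 : Matrix (Fin n) (Fin n) ℂ) - T = M - Matrix.vecMulVec t (star u) := by
    rw [hMdef]; abel
  rw [h3, Matrix.sub_mul, hinv, h2, Matrix.smul_mul, Matrix.mul_assoc, hinv, Matrix.mul_one]
end

section
/- Let T be an n×n complex matrix with Tπ = π (π ∈ ℂ^n nonzero) and e^*T = e^* (e ∈ ℂ^n nonzero). Let t, u ∈ ℂ^n satisfy e^*t ≠ 0 and u^*π ≠ 0, and suppose M := I − T + t u^* is invertible. Then a matrix G₀ is a generalized inverse of I − T if and only if there exist vectors f, g ∈ ℂ^n such that G₀ = M^{-1} + π f^* + g e^*. -/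
open Matrix

variable {n : ℕ}

lemma vmv_mul (a b : Fin n → ℂ) (C : Matrix (Fin n) (Fin n) ℂ) :
    vecMulVec a b * C = vecMulVec a (vecMul b C) := by
  ext i j
  simp [vecMulVec_apply, mul_apply, vecMul, dotProduct, Finset.mul_sum, mul_assoc]

lemma mul_vmv (a b : Fin n → ℂ) (C : Matrix (Fin n) (Fin n) ℂ) :
    C * vecMulVec a b = vecMulVec (C.mulVec a) b := by
  ext i j
  simp [vecMulVec_apply, mul_apply, mulVec, dotProduct, Finset.sum_mul, mul_assoc]

lemma vmv_mulVec (a b x : Fin n → ℂ) :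
    (vecMulVec a b).mulVec x = (dotProduct b x) • a := by
  ext i
  simp only [mulVec, dotProduct, vecMulVec_apply, Pi.smul_apply, smul_eq_mul, Finset.sum_mul]
  congr 1; ext j; ring

lemma vecMul_vmv (x a b : Fin n → ℂ) :
    vecMul x (vecMulVec a b) = (dotProduct x a) • b := by
  ext j
  simp [vecMulVec_apply, vecMul, dotProduct, Finset.sum_mul, mul_assoc]

lemma vmv_smul_left (c : ℂ) (a b : Fin n → ℂ) :
    vecMulVec (c • a) b = c • vecMulVec a b := by
  ext i j; simp [vecMulVec_apply, mul_assoc]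

lemma vmv_smul_right (c : ℂ) (a b : Fin n → ℂ) :
    vecMulVec a (c • b) = c • vecMulVec a b := by
  ext i j; simp [vecMulVec_apply]; ring

lemma vmv_zero_left (b : Fin n → ℂ) : vecMulVec (0 : Fin n → ℂ) b = 0 := by
  ext i j; simp [vecMulVec_apply]

lemma vmv_zero_right (a : Fin n → ℂ) : vecMulVec a (0 : Fin n → ℂ) = 0 := by
  ext i j; simp [vecMulVec_apply]

lemma vmv_sub_left (a a' b : Fin n → ℂ) :
    vecMulVec (a - a') b = vecMulVec a b - vecMulVec a' b := by
  ext i j; simp [vecMulVec_apply]; ring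

/-- With `Tπ = π`, `e^*T = e^*`, `e^*t ≠ 0`, `u^*π ≠ 0` and
`M := I − T + t u^*` invertible, a matrix `G₀` is a generalized inverse of `I − T`
iff `G₀ = M⁻¹ + π f^* + g e^*` for some vectors `f, g`. -/
theorem g_inverse_characterization {n : ℕ} (T : Matrix (Fin n) (Fin n) ℂ)
    (π : Fin n → ℂ) (hπ0 : π ≠ 0) (hTπ : T.mulVec π = π)
    (e : Fin n → ℂ) (he0 : e ≠ 0) (heT : Matrix.vecMul (star e) T = star e)
    (t u : Fin n → ℂ)
    (het : dotProduct (star e) t ≠ 0)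
    (huπ : dotProduct (star u) π ≠ 0)
    (M : Matrix (Fin n) (Fin n) ℂ) (hMdef : M = 1 - T + Matrix.vecMulVec t (star u))
    (hM : IsUnit M) (G₀ : Matrix (Fin n) (Fin n) ℂ) :
    (1 - T) * G₀ * (1 - T) = 1 - T ↔
      ∃ f g : Fin n → ℂ,
        G₀ = M⁻¹ + Matrix.vecMulVec π (star f) + Matrix.vecMulVec g (star e) := by
  set A : Matrix (Fin n) (Fin n) ℂ := 1 - T with hA
  set c₁ : ℂ := dotProduct (star u) π with hc₁
  set c₂ : ℂ := dotProduct (star e) t with hc₂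
  have hdet : IsUnit M.det := (Matrix.isUnit_iff_isUnit_det M).mp hM
  have hMM : M * M⁻¹ = 1 := Matrix.mul_nonsing_inv M hdet
  have hMM' : M⁻¹ * M = 1 := Matrix.nonsing_inv_mul M hdet
  -- A annihilates π on the right and star e on the left
  have hAπ : A.mulVec π = 0 := by
    rw [hA, Matrix.sub_mulVec, Matrix.one_mulVec, hTπ, sub_self]
  have heA : Matrix.vecMul (star e) A = 0 := by
    rw [hA, Matrix.vecMul_sub, Matrix.vecMul_one, heT, sub_self]
  have hMA : M = A + Matrix.vecMulVec t (star u) := hMdef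
  -- M π = c₁ • t
  have hMπ : M.mulVec π = c₁ • t := by
    rw [hMA, Matrix.add_mulVec, hAπ, vmv_mulVec, zero_add]
  -- M⁻¹ t = c₁⁻¹ • π
  have hMit : M⁻¹.mulVec t = c₁⁻¹ • π := by
    have : M⁻¹.mulVec (M.mulVec π) = π := by
      rw [Matrix.mulVec_mulVec, hMM', Matrix.one_mulVec]
    rw [hMπ, Matrix.mulVec_smul] at this
    rw [← this, smul_smul, inv_mul_cancel₀ huπ, one_smul]
  -- e^* M = c₂ • u^*
  have heM : Matrix.vecMul (star e) M = c₂ • star u := by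
    rw [hMA, Matrix.vecMul_add, heA, vecMul_vmv, zero_add]
  -- u^* M⁻¹ = c₂⁻¹ • e^*
  have huMi : Matrix.vecMul (star u) M⁻¹ = c₂⁻¹ • star e := by
    have : Matrix.vecMul (Matrix.vecMul (star e) M) M⁻¹ = star e := by
      rw [Matrix.vecMul_vecMul, hMM, Matrix.vecMul_one]
    rw [heM, Matrix.smul_vecMul] at this
    rw [← this, smul_smul, inv_mul_cancel₀ het, one_smul]
  -- A * M⁻¹ and M⁻¹ * A
  have hAMi : A * M⁻¹ = 1 - c₂⁻¹ • Matrix.vecMulVec t (star e) := by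
    have h : A = M - Matrix.vecMulVec t (star u) := by rw [hMA]; abel
    rw [h, Matrix.sub_mul, hMM, vmv_mul, huMi, vmv_smul_right]
  have hMiA : M⁻¹ * A = 1 - c₁⁻¹ • Matrix.vecMulVec π (star u) := by
    have h : A = M - Matrix.vecMulVec t (star u) := by rw [hMA]; abel
    rw [h, Matrix.mul_sub, hMM', mul_vmv, hMit, vmv_smul_left]
  -- A M⁻¹ A = A
  have hkey : A * M⁻¹ * A = A := by
    rw [hAMi, sub_mul, one_mul, Matrix.smul_mul, vmv_mul, heA, vmv_zero_right,
      smul_zero, sub_zero]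
  constructor
  · intro hG
    set D : Matrix (Fin n) (Fin n) ℂ := G₀ - M⁻¹ with hD
    have hADA : A * D * A = 0 := by
      have h : A * D * A = A * G₀ * A - A * M⁻¹ * A := by rw [hD]; noncomm_ring
      rw [h, hG, hkey, sub_self]
    have hPDQ : (M⁻¹ * A) * D * (A * M⁻¹) = 0 := by
      calc (M⁻¹ * A) * D * (A * M⁻¹) = M⁻¹ * (A * D * A) * M⁻¹ := by
            simp only [Matrix.mul_assoc]
        _ = 0 := by rw [hADA, Matrix.mul_zero, Matrix.zero_mul]
    set w : Fin n → ℂ := Matrix.vecMul (star u) D with hw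
    set v : Fin n → ℂ := D.mulVec t with hv
    set s : ℂ := dotProduct w t with hs
    have hexp : D - c₁⁻¹ • Matrix.vecMulVec π w - c₂⁻¹ • Matrix.vecMulVec v (star e)
        + (c₁⁻¹ * (c₂⁻¹ * s)) • Matrix.vecMulVec π (star e) = 0 := by
      have e1 : (M⁻¹ * A) * D = D - c₁⁻¹ • Matrix.vecMulVec π w := by
        rw [hMiA, sub_mul, one_mul, Matrix.smul_mul, vmv_mul, hw]
      have e2 : (D - c₁⁻¹ • Matrix.vecMulVec π w) * (A * M⁻¹)
          = D - c₁⁻¹ • Matrix.vecMulVec π w - c₂⁻¹ • Matrix.vecMulVec v (star e)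
            + (c₁⁻¹ * (c₂⁻¹ * s)) • Matrix.vecMulVec π (star e) := by
        rw [hAMi, mul_sub, mul_one, Matrix.mul_smul, sub_mul, mul_vmv, hv,
          Matrix.smul_mul, vmv_mul, vecMul_vmv]
        simp only [smul_smul, vmv_smul_right]
        module
      rw [← e2, ← e1]
      exact hPDQ
    have hDeq : D = c₁⁻¹ • Matrix.vecMulVec π w
        + (c₂⁻¹ • Matrix.vecMulVec v (star e)
           - (c₁⁻¹ * (c₂⁻¹ * s)) • Matrix.vecMulVec π (star e)) := by
      have h2 : D - (c₁⁻¹ • Matrix.vecMulVec π w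
          + (c₂⁻¹ • Matrix.vecMulVec v (star e)
             - (c₁⁻¹ * (c₂⁻¹ * s)) • Matrix.vecMulVec π (star e))) = 0 := by
        rw [show D - (c₁⁻¹ • Matrix.vecMulVec π w
          + (c₂⁻¹ • Matrix.vecMulVec v (star e)
             - (c₁⁻¹ * (c₂⁻¹ * s)) • Matrix.vecMulVec π (star e)))
          = D - c₁⁻¹ • Matrix.vecMulVec π w - c₂⁻¹ • Matrix.vecMulVec v (star e)
            + (c₁⁻¹ * (c₂⁻¹ * s)) • Matrix.vecMulVec π (star e) from by abel]
        exact hexp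
      exact eq_of_sub_eq_zero h2
    refine ⟨star (c₁⁻¹ • w), c₂⁻¹ • v - (c₁⁻¹ * (c₂⁻¹ * s)) • π, ?_⟩
    have h1 : star (star (c₁⁻¹ • w)) = c₁⁻¹ • w := star_star _
    rw [h1, vmv_smul_right, vmv_sub_left, vmv_smul_left, vmv_smul_left]
    have h3 : G₀ = M⁻¹ + D := by rw [hD]; abel
    rw [h3, hDeq, add_assoc]
  · rintro ⟨f, g, rfl⟩
    rw [Matrix.mul_add, Matrix.mul_add, Matrix.add_mul, Matrix.add_mul,
      mul_vmv, hAπ, vmv_zero_left, Matrix.zero_mul, add_zero,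
      mul_vmv, vmv_mul, heA, vmv_zero_right, add_zero, hkey]
end

section
/- Let T be an n×n complex matrix such that 1 is an eigenvalue of T whose algebraic multiplicity as a root of the characteristic polynomial of T equals 1, let π ∈ ℂ^n satisfy Tπ = π, let e ∈ ℂ^n satisfy e^*T = e^*, and assume e^*π = 1. Let Ω := π e^*. Then the matrix I − T + Ω is invertible and Z := (I − T + Ω)^{-1} is a generalized inverse of I − T, i.e. (I − T) Z (I − T) = I − T. -/
open Matrix
open Polynomial

lemma charpoly_sub_one' {n : ℕ} (T : Matrix (Fin n) (Fin n) ℂ) :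
    (T - 1).charpoly = (T.charpoly).comp (X + C 1) := by
  have h : (T.charpoly).comp (X + C 1) = (eval₂RingHom C (X + C (1:ℂ))) T.charpoly := by
    simp [Polynomial.comp]
  rw [h, Matrix.charpoly, Matrix.charpoly, RingHom.map_det]
  congr 1
  ext i j
  by_cases hij : i = j
  · subst hij
    simp [charmatrix_apply_eq, Matrix.sub_apply, Matrix.one_apply_eq, map_sub, C_sub]
    ring
  · simp [charmatrix_apply_ne _ _ _ hij, Matrix.sub_apply, Matrix.one_apply_ne hij]

lemma eig_unique' {n : ℕ} (T : Matrix (Fin n) (Fin n) ℂ)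
    (hmult : (Matrix.charpoly T).rootMultiplicity 1 = 1)
    (π : Fin n → ℂ) (hπ : π ≠ 0) (hTπ : T.mulVec π = π)
    (v : Fin n → ℂ) (hv : T.mulVec v = v) : ∃ c : ℂ, v = c • π := by
  set φ : Module.End ℂ (Fin n → ℂ) := Matrix.toLin' (T - 1) with hφ
  have hchar : φ.charpoly = (T - 1).charpoly := by
    rw [← LinearMap.charpoly_toMatrix φ (Pi.basisFun ℂ (Fin n))]
    congr 1
    rw [LinearMap.toMatrix_eq_toMatrix', hφ, LinearMap.toMatrix'_toLin']
  have hfr : Module.finrank ℂ (φ.maxGenEigenspace 0) = 1 := by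
    rw [LinearMap.finrank_maxGenEigenspace_zero_eq, hchar, charpoly_sub_one',
      ← Polynomial.rootMultiplicity_eq_natTrailingDegree, hmult]
  have hmem : ∀ w : Fin n → ℂ, T.mulVec w = w → w ∈ φ.maxGenEigenspace 0 := by
    intro w hw
    rw [Module.End.mem_maxGenEigenspace]
    exact ⟨1, by simp [hφ, Matrix.toLin'_apply, Matrix.sub_mulVec, hw]⟩
  have hspan : (Submodule.span ℂ {π}) = φ.maxGenEigenspace 0 := by
    apply Submodule.eq_of_le_of_finrank_eq
    · rw [Submodule.span_le, Set.singleton_subset_iff]; exact hmem π hTπ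
    · rw [hfr, finrank_span_singleton hπ]
  have := hmem v hv
  rw [← hspan, Submodule.mem_span_singleton] at this
  obtain ⟨c, hc⟩ := this
  exact ⟨c, hc.symm⟩


/-- If 1 is an eigenvalue of `T` of algebraic multiplicity one, `Tπ = π`,
`e^*T = e^*` and `e^*π = 1`, then with `Ω := π e^*` the matrix `I − T + Ω` is invertible
and the fundamental matrix `Z = (I − T + Ω)⁻¹` is a generalized inverse of `I − T`. -/
theorem fundamental_matrix_is_g_inverse {n : ℕ} (T : Matrix (Fin n) (Fin n) ℂ)
    (hroot : (Matrix.charpoly T).IsRoot 1)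
    (hmult : (Matrix.charpoly T).rootMultiplicity 1 = 1)
    (π : Fin n → ℂ) (hTπ : T.mulVec π = π)
    (e : Fin n → ℂ) (heT : Matrix.vecMul (star e) T = star e)
    (heπ : dotProduct (star e) π = 1)
    (Ω : Matrix (Fin n) (Fin n) ℂ) (hΩ : Ω = Matrix.vecMulVec π (star e)) :
    IsUnit (1 - T + Ω) ∧ (1 - T) * (1 - T + Ω)⁻¹ * (1 - T) = 1 - T := by
  have hsum : ∑ k, star e k * π k = 1 := heπ
  have hπne : π ≠ 0 := by
    intro h
    rw [h] at heπ
    simp [dotProduct] at heπ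
  have hTΩ : T * Ω = Ω := by
    subst hΩ
    ext i j
    have h1 := congrFun hTπ i
    simp only [Matrix.mulVec, dotProduct] at h1
    simp only [Matrix.mul_apply, vecMulVec_apply, ← mul_assoc, ← Finset.sum_mul, h1]
  have hΩT : Ω * T = Ω := by
    subst hΩ
    ext i j
    have h1 := congrFun heT j
    simp only [Matrix.vecMul, dotProduct] at h1
    have h2 : ∀ k, π i * star e k * T k j = π i * (star e k * T k j) := fun k => by ring
    simp only [Matrix.mul_apply, vecMulVec_apply, h2, ← Finset.mul_sum, h1]
  have hΩΩ : Ω * Ω = Ω := by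
    subst hΩ
    ext i j
    simp only [Matrix.mul_apply, vecMulVec_apply]
    have h2 : ∀ k, π i * star e k * (π k * star e j)
        = (π i * star e j) * (star e k * π k) := fun k => by ring
    simp only [h2, ← Finset.mul_sum, hsum, mul_one]
  set A := 1 - T + Ω with hA
  have hUnit : IsUnit A := by
    rw [Matrix.isUnit_iff_isUnit_det, isUnit_iff_ne_zero]
    intro hdet
    obtain ⟨v, hvne, hv0⟩ := (Matrix.exists_mulVec_eq_zero_iff).mpr hdet
    have heΩ : Matrix.vecMul (star e) Ω = star e := by
      subst hΩ
      ext j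
      have h2 : ∀ k, star e k * (π k * star e j) = (star e k * π k) * star e j :=
        fun k => by ring
      simp only [Matrix.vecMul, dotProduct, vecMulVec_apply, h2,
        ← Finset.sum_mul, hsum, one_mul]
    have heA : Matrix.vecMul (star e) A = star e := by
      rw [hA, Matrix.vecMul_add, Matrix.vecMul_sub, Matrix.vecMul_one, heT, heΩ]
      simp
    have hev : dotProduct (star e) v = 0 := by
      have h3 := dotProduct_mulVec (star e) A v
      rw [hv0, heA] at h3
      simpa using h3.symm
    have hΩv : Ω.mulVec v = 0 := by
      subst hΩ
      ext i
      have h2 : ∀ k, π i * star e k * v k = π i * (star e k * v k) := fun k => by ring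
      simp only [Matrix.mulVec, dotProduct, vecMulVec_apply, h2, ← Finset.mul_sum]
      rw [show ∑ k, star e k * v k = 0 from hev, mul_zero]
      simp
    have hTv : T.mulVec v = v := by
      have h3 := hv0
      rw [hA, Matrix.add_mulVec, Matrix.sub_mulVec, Matrix.one_mulVec, hΩv, add_zero] at h3
      exact (sub_eq_zero.mp h3).symm
    obtain ⟨c, hc⟩ := eig_unique' T hmult π hπne hTπ v hTv
    have hc0 : c = 0 := by
      have h3 : dotProduct (star e) v = c := by
        rw [hc, dotProduct_smul, heπ, smul_eq_mul, mul_one]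
      rw [hev] at h3; exact h3.symm
    exact hvne (by rw [hc, hc0, zero_smul])
  refine ⟨hUnit, ?_⟩
  have hInv : A * A⁻¹ = 1 := Matrix.mul_nonsing_inv A ((Matrix.isUnit_iff_isUnit_det A).mp hUnit)
  have hΩA : Ω * A = Ω := by
    rw [hA, mul_add, mul_sub, mul_one, hΩT, hΩΩ]; abel
  have hΩAinv : Ω * A⁻¹ = Ω := by
    calc Ω * A⁻¹ = (Ω * A) * A⁻¹ := by rw [hΩA]
    _ = Ω * (A * A⁻¹) := by rw [mul_assoc]
    _ = Ω := by rw [hInv, mul_one]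
  have h1T : (1 : Matrix (Fin n) (Fin n) ℂ) - T = A - Ω := by rw [hA]; abel
  rw [show (1 - T + Ω)⁻¹ = A⁻¹ from rfl, h1T]
  calc (A - Ω) * A⁻¹ * (A - Ω)
      = (A * A⁻¹ - Ω * A⁻¹) * (A - Ω) := by rw [sub_mul]
    _ = (1 - Ω) * (A - Ω) := by rw [hInv, hΩAinv]
    _ = A - Ω - (Ω * A - Ω * Ω) := by noncomm_ring
    _ = A - Ω := by rw [hΩA, hΩΩ]; abel
end

section
/- Let T be an n×n complex matrix whose fixed space is one-dimensional: ker(I − T) = ℂ·π for a vector π ∈ ℂ^n, and let e ∈ ℂ^n satisfy e^*π = 1. Let G be any generalized inverse of I − T and set A := I − G(I − T). Then for every vector v ∈ ℂ^n with e^*(Av) ≠ 0 one has π = (A v)/(e^*(A v)). -/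
open Matrix

/-- If the fixed space of `T` is one-dimensional, spanned by `π`, `e^*π = 1`,
`G` is any generalized inverse of `I − T` and `A := I − G(I − T)`, then for every `v` with
`e^*(Av) ≠ 0` one has `π = (Av)/(e^*(Av))`. -/
theorem stationary_from_g_inverse {n : ℕ} (T : Matrix (Fin n) (Fin n) ℂ)
    (π : Fin n → ℂ)
    (hker : ∀ x : Fin n → ℂ, (1 - T).mulVec x = 0 ↔ ∃ c : ℂ, x = c • π)
    (e : Fin n → ℂ) (heπ : dotProduct (star e) π = 1)
    (G : Matrix (Fin n) (Fin n) ℂ) (hG : (1 - T) * G * (1 - T) = 1 - T)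
    (A : Matrix (Fin n) (Fin n) ℂ) (hA : A = 1 - G * (1 - T)) :
    ∀ v : Fin n → ℂ, dotProduct (star e) (A.mulVec v) ≠ 0 →
      π = (dotProduct (star e) (A.mulVec v))⁻¹ • A.mulVec v := by
  intro v hv
  have hTA : (1 - T) * A = 0 := by
    rw [hA, mul_sub, mul_one, ← mul_assoc, hG, sub_self]
  have hker' : (1 - T).mulVec (A.mulVec v) = 0 := by
    rw [Matrix.mulVec_mulVec, hTA, Matrix.zero_mulVec]
  obtain ⟨c, hc⟩ := (hker _).mp hker'
  rw [hc] at hv ⊢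
  have hdot : dotProduct (star e) (c • π) = c := by
    rw [dotProduct_smul, heπ, smul_eq_mul, mul_one]
  rw [hdot] at hv ⊢
  rw [smul_smul, inv_mul_cancel₀ hv, one_smul]
end

section
/- Let T be an n×n complex matrix, π ∈ ℂ^n with (I − T)π = 0, and e ∈ ℂ^n with e^*π = 1. Let t, u ∈ ℂ^n satisfy u^*π ≠ 0 and suppose M := I − T + t u^* is invertible. Then e^*(M^{-1} t) ≠ 0 and π = (M^{-1} t)/(e^*(M^{-1} t)). -/
open Matrix

/-- If `(I − T)π = 0`, `e^*π = 1`, `u^*π ≠ 0` and `M := I − T + t u^*` is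
invertible, then `e^*(M⁻¹t) ≠ 0` and `π = (M⁻¹t)/(e^*(M⁻¹t))`. -/
theorem stationary_formula {n : ℕ} (T : Matrix (Fin n) (Fin n) ℂ)
    (π : Fin n → ℂ) (hπ : (1 - T).mulVec π = 0)
    (e : Fin n → ℂ) (heπ : dotProduct (star e) π = 1)
    (t u : Fin n → ℂ) (huπ : dotProduct (star u) π ≠ 0)
    (M : Matrix (Fin n) (Fin n) ℂ) (hMdef : M = 1 - T + Matrix.vecMulVec t (star u))
    (hM : IsUnit M) :
    dotProduct (star e) (M⁻¹.mulVec t) ≠ 0 ∧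
      π = (dotProduct (star e) (M⁻¹.mulVec t))⁻¹ • M⁻¹.mulVec t := by
  set c : ℂ := dotProduct (star u) π with hc
  have hMπ : M.mulVec π = c • t := by
    rw [hMdef, Matrix.add_mulVec, hπ, zero_add]
    ext i
    simp only [Matrix.mulVec, Matrix.vecMulVec_apply, dotProduct, Pi.smul_apply,
      smul_eq_mul, hc, Finset.sum_mul, Finset.mul_sum]
    exact Finset.sum_congr rfl fun j _ => by ring
  have hinv : M⁻¹ * M = 1 := Matrix.nonsing_inv_mul M (Matrix.isUnit_iff_isUnit_det M |>.mp hM)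
  have hπeq : π = c • M⁻¹.mulVec t := by
    have := congrArg (M⁻¹.mulVec ·) hMπ
    simpa [Matrix.mulVec_mulVec, hinv, Matrix.mulVec_smul] using this
  have hd : c * dotProduct (star e) (M⁻¹.mulVec t) = 1 := by
    rw [← heπ, hπeq, dotProduct_smul, smul_eq_mul]
  have hne : dotProduct (star e) (M⁻¹.mulVec t) ≠ 0 := by
    intro h; rw [h, mul_zero] at hd; exact one_ne_zero hd.symm
  refine ⟨hne, ?_⟩
  have hcinv : (dotProduct (star e) (M⁻¹.mulVec t))⁻¹ = c :=
    eq_comm.mp (eq_inv_of_mul_eq_one_left hd)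
  rw [hcinv, hπeq]
end

section
/- Block setting with n vertices, internal degree k, N = nk². Let T be an N×N complex matrix with Tπ = π for some π ∈ ℂ^N satisfying e_I^*π = 1, and with e_I^*T = e_I^*; set Ω := π e_I^*. Let t, u ∈ ℂ^N satisfy e_I^*t ≠ 0 and u^*π ≠ 0, suppose M := I − T + t u^* is invertible, let f, g ∈ ℂ^N be arbitrary, and set G := M^{-1} + π f^* + g e_I^* (a generalized inverse of I − T). Let K be any N×N matrix, let D := K_d be its block-diagonal part, and set L := K − (K − D)T. Assume: (i) w^* L_{ij} = w^* for all block indices i,j; and (ii) w^* D_{ii} π^{(i)} = 1 for every i, where π^{(i)} ∈ ℂ^{k²} is the i-th block of π. Then for all block indices i,j: w^* K_{ij} = w^* [ D( ΩG − (ΩG)_d E + I − G + G_d E ) ]_{ij}. Equivalently, for every k×k density matrix ρ (positive semidefinite with trace 1), the trace of the k×k matrix whose vectorization is K_{ij} vec(ρ) equals the trace of the k×k matrix whose vectorization is [D(ΩG − (ΩG)_dE + I − G + G_dE)]_{ij} vec(ρ). -/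
open Matrix

/-- Index type for the block setting: `n` vertices, each block of size `k² = k × k`. -/
abbrev QIdx (n k : ℕ) := Fin n × (Fin k × Fin k)

/-- Row-stacking vectorization of the `k×k` identity matrix, as a vector in `ℂ^{k²}`. -/
def wVec (k : ℕ) : Fin k × Fin k → ℂ := fun p => if p.1 = p.2 then 1 else 0

/-- The vector `e_I ∈ ℂ^{nk²}` all of whose `n` blocks equal `vec(I_k)`. -/
def eIVec (n k : ℕ) : QIdx n k → ℂ := fun x => wVec k x.2

/-- The `(i,j)` block (a `k²×k²` matrix) of an `nk²×nk²` matrix. -/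
def blk {n k : ℕ} (M : Matrix (QIdx n k) (QIdx n k) ℂ) (i j : Fin n) :
    Matrix (Fin k × Fin k) (Fin k × Fin k) ℂ := fun p q => M (i, p) (j, q)

/-- The block-diagonal part `M_d` of an `nk²×nk²` matrix. -/
def blkDiag {n k : ℕ} (M : Matrix (QIdx n k) (QIdx n k) ℂ) :
    Matrix (QIdx n k) (QIdx n k) ℂ := fun x y => if x.1 = y.1 then M x y else 0

/-- The block matrix `E` all of whose `n²` blocks equal the `k²×k²` identity. -/
def Emat (n k : ℕ) : Matrix (QIdx n k) (QIdx n k) ℂ :=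
  fun x y => if x.2 = y.2 then 1 else 0

lemma vecMul_vecMulVec' {m : Type*} [Fintype m] (v a b : m → ℂ) :
    vecMul v (vecMulVec a b) = (dotProduct v a) • b := by
  funext j
  simp only [vecMul, vecMulVec, dotProduct, Pi.smul_apply, smul_eq_mul, of_apply,
    Finset.sum_mul]
  exact Finset.sum_congr rfl fun x _ => (mul_assoc _ _ _).symm

lemma mul_vecMulVec' {m : Type*} [Fintype m] (M : Matrix m m ℂ) (a b : m → ℂ) :
    M * vecMulVec a b = vecMulVec (M.mulVec a) b := by
  ext x y
  simp only [mul_apply, vecMulVec, of_apply, mulVec, dotProduct, Finset.sum_mul]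
  exact Finset.sum_congr rfl fun z _ => (mul_assoc _ _ _).symm

lemma vecMulVec_mul' {m : Type*} [Fintype m] (a b : m → ℂ) (M : Matrix m m ℂ) :
    vecMulVec a b * M = vecMulVec a (vecMul b M) := by
  ext x y
  simp only [mul_apply, vecMulVec, of_apply, vecMul, dotProduct, Finset.mul_sum]
  exact Finset.sum_congr rfl fun z _ => (mul_assoc _ _ _)

lemma zero_vecMulVec' {m : Type*} (b : m → ℂ) : vecMulVec (0 : m → ℂ) b = 0 := by
  ext x y; simp [vecMulVec]

lemma blkDiag_mul_Emat {n k : ℕ} (Y : Matrix (QIdx n k) (QIdx n k) ℂ) (x y : QIdx n k) :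
    (blkDiag Y * Emat n k) x y = Y x (x.1, y.2) := by
  rw [mul_apply, Finset.sum_eq_single ((x.1, y.2) : QIdx n k)]
  · simp [blkDiag, Emat]
  · rintro ⟨b1, b2⟩ _ hb
    simp only [blkDiag, Emat]
    by_cases h1 : x.1 = b1
    · by_cases h2 : b2 = y.2
      · subst h1; subst h2; simp at hb
      · simp [h2]
    · simp [h1]
  · simp

lemma vecMul_blk {n k : ℕ} (i : Fin n) (M : Matrix (QIdx n k) (QIdx n k) ℂ)
    (j : Fin n) (q : Fin k × Fin k) :
    vecMul (fun x : QIdx n k => if x.1 = i then star (wVec k) x.2 else 0) M (j, q)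
      = vecMul (star (wVec k)) (blk M i j) q := by
  simp only [vecMul, dotProduct, Fintype.sum_prod_type, blk, ite_mul, zero_mul]
  rw [Finset.sum_eq_single i]
  · simp
  · intro b _ hb; simp [hb]
  · simp

lemma vecMul_blkDiag_Emat {n k : ℕ} (i : Fin n) (v : QIdx n k → ℂ)
    (hv : ∀ x : QIdx n k, x.1 ≠ i → v x = 0)
    (Y : Matrix (QIdx n k) (QIdx n k) ℂ) (j : Fin n) (q : Fin k × Fin k) :
    vecMul v (blkDiag Y * Emat n k) (j, q) = vecMul v Y (i, q) := by
  simp only [vecMul, dotProduct, blkDiag_mul_Emat]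
  refine Finset.sum_congr rfl fun z _ => ?_
  by_cases hz : z.1 = i
  · rw [hz]
  · rw [hv z hz, zero_mul, zero_mul]

/-- Hunter's formula for quantum Markov chains, general generalized inverse.
With `Tπ = π`, `e_I^*π = 1`, `e_I^*T = e_I^*`, `Ω = π e_I^*`,
`G = (I − T + t u^*)⁻¹ + π f^* + g e_I^*` a generalized inverse of `I − T`,
`D = K_d` and `L = K − (K − D)T` satisfying the first-step identity (i) and Kac's lemma (ii),
for all block indices `i, j`:
`w^* K_{ij} = w^* [D(ΩG − (ΩG)_d E + I − G + G_d E)]_{ij}`. -/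
theorem hunters_formula_QMC {n k : ℕ}
    (T : Matrix (QIdx n k) (QIdx n k) ℂ)
    (π : QIdx n k → ℂ) (hTπ : T.mulVec π = π)
    (hπ1 : dotProduct (star (eIVec n k)) π = 1)
    (heT : Matrix.vecMul (star (eIVec n k)) T = star (eIVec n k))
    (Ω : Matrix (QIdx n k) (QIdx n k) ℂ)
    (hΩ : Ω = Matrix.vecMulVec π (star (eIVec n k)))
    (t u : QIdx n k → ℂ)
    (het : dotProduct (star (eIVec n k)) t ≠ 0)
    (huπ : dotProduct (star u) π ≠ 0)
    (M : Matrix (QIdx n k) (QIdx n k) ℂ)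
    (hMdef : M = 1 - T + Matrix.vecMulVec t (star u)) (hM : IsUnit M)
    (f g : QIdx n k → ℂ)
    (G : Matrix (QIdx n k) (QIdx n k) ℂ)
    (hG : G = M⁻¹ + Matrix.vecMulVec π (star f) + Matrix.vecMulVec g (star (eIVec n k)))
    (K D L : Matrix (QIdx n k) (QIdx n k) ℂ)
    (hD : D = blkDiag K) (hL : L = K - (K - D) * T)
    (hLtr : ∀ i j : Fin n, Matrix.vecMul (star (wVec k)) (blk L i j) = star (wVec k))
    (hKac : ∀ i : Fin n,
      dotProduct (star (wVec k)) ((blk D i i).mulVec (fun p => π (i, p))) = 1) :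
    ∀ i j : Fin n,
      Matrix.vecMul (star (wVec k)) (blk K i j) =
        Matrix.vecMul (star (wVec k))
          (blk (D * (Ω * G - blkDiag (Ω * G) * Emat n k + 1 - G + blkDiag G * Emat n k)) i j) := by
  intro i j
  set e : QIdx n k → ℂ := star (eIVec n k) with he
  set A : Matrix (QIdx n k) (QIdx n k) ℂ := 1 - T with hA
  -- basic matrix facts
  have hAπ : A.mulVec π = 0 := by
    rw [hA, sub_mulVec, one_mulVec, hTπ, sub_self]
  have heA : vecMul e A = 0 := by
    rw [hA, vecMul_sub, vecMul_one, heT, sub_self]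
  have hMA : M = A + vecMulVec t (star u) := by rw [hMdef, hA]
  have heM : vecMul e M = dotProduct e t • star u := by
    rw [hMA, vecMul_add, heA, zero_add, vecMul_vecMulVec']
  have hMinv : M * M⁻¹ = 1 := Matrix.mul_nonsing_inv M ((Matrix.isUnit_iff_isUnit_det M).mp hM)
  have huMinv : vecMul (star u) M⁻¹ = (dotProduct e t)⁻¹ • e := by
    have h1 : vecMul (vecMul e M) M⁻¹ = e := by
      rw [vecMul_vecMul, hMinv, vecMul_one]
    rw [heM, smul_vecMul] at h1
    calc vecMul (star u) M⁻¹
        = (dotProduct e t)⁻¹ • (dotProduct e t • vecMul (star u) M⁻¹) := by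
          rw [smul_smul, inv_mul_cancel₀ het, one_smul]
      _ = (dotProduct e t)⁻¹ • e := by rw [h1]
  have hAMinv : A * M⁻¹ = 1 - vecMulVec t ((dotProduct e t)⁻¹ • e) := by
    have hAe : A = M - vecMulVec t (star u) := eq_sub_of_add_eq hMA.symm
    rw [hAe, sub_mul, hMinv, vecMulVec_mul', huMinv]
  have hAG : A * G = 1 - vecMulVec t ((dotProduct e t)⁻¹ • e) + vecMulVec (A.mulVec g) e := by
    rw [hG, mul_add, mul_add, hAMinv, mul_vecMulVec', mul_vecMulVec', hAπ, zero_vecMulVec',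
      add_zero]
  -- row functionals
  set r : QIdx n k → ℂ := fun x => if x.1 = i then star (wVec k) x.2 else 0 with hr
  set d : QIdx n k → ℂ := vecMul r D with hd'
  have hdsupp : ∀ x : QIdx n k, x.1 ≠ i → d x = 0 := by
    rintro ⟨l, q⟩ hl
    simp only [hd', hr, vecMul, dotProduct, ite_mul, zero_mul]
    apply Finset.sum_eq_zero
    rintro ⟨m, p⟩ _
    by_cases hm : m = i
    · have hil : ¬ (i = l) := fun h => hl h.symm
      rw [hD]; simp [blkDiag, hm, hil]
    · simp [hm]
  have hdπ : dotProduct d π = 1 := by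
    rw [hd', ← dotProduct_mulVec, ← hKac i]
    have h1 : dotProduct r (D.mulVec π) = ∑ p : Fin k × Fin k,
        star (wVec k) p * (D.mulVec π) (i, p) := by
      rw [dotProduct, Fintype.sum_prod_type, Finset.sum_eq_single i]
      · simp [hr]
      · intro b _ hb; simp [hr, hb]
      · simp
    have h2 : ∀ p, (D.mulVec π) (i, p) = ((blk D i i).mulVec (fun q => π (i, q))) p := by
      intro p
      rw [mulVec, dotProduct, Fintype.sum_prod_type, Finset.sum_eq_single i]
      · rfl
      · intro b _ hb
        apply Finset.sum_eq_zero; intro q _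
        rw [hD]; simp [blkDiag, Ne.symm hb]
      · simp
    rw [h1]
    simp only [h2]
    rfl
  -- hypothesis (i) in row form
  have hrL : vecMul r L = e := by
    funext x
    calc vecMul r L x = vecMul (star (wVec k)) (blk L i x.1) x.2 := vecMul_blk i L x.1 x.2
      _ = star (wVec k) x.2 := congrFun (hLtr i x.1) x.2
      _ = e x := rfl
  -- (★)
  have hrKA : vecMul (vecMul r K - d) A = e - d := by
    have h0 : vecMul r L = vecMul r K - vecMul (vecMul r K - d) T := by
      rw [hL, vecMul_sub, ← vecMul_vecMul, vecMul_sub, hd']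
    have h1 : vecMul (vecMul r K - d) T = vecMul r K - e := by
      rw [← hrL, h0]; abel
    rw [hA, vecMul_sub, vecMul_one, h1]
    abel
  -- (★★)
  set s : QIdx n k → ℂ := vecMul r K - d with hs
  set α : ℂ := dotProduct s (A.mulVec g) - (dotProduct e t)⁻¹ * dotProduct s t with hα
  have hsG : vecMul (e - d) G = s + α • e := by
    rw [← hrKA, vecMul_vecMul, hAG, vecMul_add, vecMul_sub, vecMul_one,
      vecMul_vecMulVec', vecMul_vecMulVec', hα]
    funext x
    simp only [Pi.add_apply, Pi.sub_apply, Pi.smul_apply, smul_eq_mul, smul_smul]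
    ring
  have hK : vecMul r K = fun x => d x + vecMul (e - d) G x - α * e x := by
    funext x
    have := congrFun hsG x
    simp only [Pi.add_apply, Pi.smul_apply, smul_eq_mul] at this
    have hsx : s x = vecMul r K x - d x := rfl
    rw [this, hsx]; ring
  -- (†)
  have hrKd : ∀ q : Fin k × Fin k, vecMul r K (i, q) = d (i, q) := by
    intro q
    rw [hd']
    simp only [vecMul, dotProduct]
    refine Finset.sum_congr rfl fun z _ => ?_
    by_cases hz : z.1 = i
    · rw [hD]; simp [blkDiag, hz]
    · simp [hr, hz]
  have hdag : ∀ q : Fin k × Fin k, vecMul (e - d) G (i, q) = α * e (i, q) := by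
    intro q
    have := congrFun hK (i, q)
    rw [hrKd q] at this
    linear_combination -this
  -- d-row facts
  have hdΩ : vecMul d Ω = e := by rw [hΩ, vecMul_vecMulVec', hdπ, one_smul]
  have hdΩG : vecMul d (Ω * G) = vecMul e G := by rw [← vecMul_vecMul, hdΩ]
  -- final computation
  funext q
  rw [← vecMul_blk i K j q, ← vecMul_blk i (D * _) j q, ← hr, ← vecMul_vecMul, ← hd']
  -- expand the big product
  rw [vecMul_add, vecMul_sub, vecMul_add, vecMul_sub, vecMul_one]
  simp only [Pi.add_apply, Pi.sub_apply]
  rw [vecMul_blkDiag_Emat i d hdsupp (Ω * G) j q, vecMul_blkDiag_Emat i d hdsupp G j q,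
    hdΩG]
  have hKjq := congrFun hK (j, q)
  have hediff : ∀ x : QIdx n k, vecMul (e - d) G x = vecMul e G x - vecMul d G x := by
    intro x; rw [sub_vecMul]; rfl
  have h1 : vecMul (e - d) G (j, q) = vecMul e G (j, q) - vecMul d G (j, q) := hediff _
  have h2 : vecMul (e - d) G (i, q) = vecMul e G (i, q) - vecMul d G (i, q) := hediff _
  have h3 := hdag q
  have heq : e (i, q) = e (j, q) := rfl
  rw [h1] at hKjq
  rw [h2, heq] at h3
  rw [hKjq]
  linear_combination h3
end

section
/- Block setting with n vertices, internal degree k, N = nk². Let T be an N×N complex matrix with Tπ = π for some π ∈ ℂ^N satisfying e_I^*π = 1, and with e_I^*T = e_I^*; set Ω := π e_I^*. Let u ∈ ℂ^N satisfy e_I^*u ≠ 0, suppose M := I − T + u e_I^* is invertible, let f ∈ ℂ^N be arbitrary, and set G := M^{-1} + f e_I^*. Let K be any N×N matrix, let D := K_d be its block-diagonal part, and set L := K − (K − D)T. Assume: (i) w^* L_{ij} = w^* for all block indices i,j; and (ii) w^* D_{ii} π^{(i)} = 1 for every i, where π^{(i)} ∈ ℂ^{k²} is the i-th block of π. Then for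 all block indices i,j: w^* K_{ij} = w^* [ D( I − G + G_d E ) ]_{ij}, i.e. the ΩG-terms of Hunter's formula drop out for this choice of generalized inverse. -/
open Matrix

private lemma vecMul_vecMulVec_eq {m : Type*} [Fintype m] (x u v : m → ℂ) :
    Matrix.vecMul x (Matrix.vecMulVec u v) = (dotProduct x u) • v := by
  funext y
  simp [Matrix.vecMul, Matrix.vecMulVec, dotProduct, Finset.sum_mul, mul_assoc]

private lemma sum_fin_single {n : ℕ} (i : Fin n) (g : Fin n → ℂ) (hg : ∀ j, j ≠ i → g j = 0) :
    ∑ j, g j = g i :=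
  Finset.sum_eq_single i (fun b _ hb => hg b hb) (by simp)
/-- Hunter's formula, part (b): for the special generalized inverse
`G = (I − T + u e_I^*)⁻¹ + f e_I^*` the `ΩG` terms drop out and
`w^* K_{ij} = w^* [D(I − G + G_d E)]_{ij}` for all block indices `i, j`. -/
theorem hunters_formula_QMC_special {n k : ℕ}
    (T : Matrix (QIdx n k) (QIdx n k) ℂ)
    (π : QIdx n k → ℂ) (hTπ : T.mulVec π = π)
    (hπ1 : dotProduct (star (eIVec n k)) π = 1)
    (heT : Matrix.vecMul (star (eIVec n k)) T = star (eIVec n k))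
    (Ω : Matrix (QIdx n k) (QIdx n k) ℂ)
    (hΩ : Ω = Matrix.vecMulVec π (star (eIVec n k)))
    (u : QIdx n k → ℂ)
    (heu : dotProduct (star (eIVec n k)) u ≠ 0)
    (M : Matrix (QIdx n k) (QIdx n k) ℂ)
    (hMdef : M = 1 - T + Matrix.vecMulVec u (star (eIVec n k))) (hM : IsUnit M)
    (f : QIdx n k → ℂ)
    (G : Matrix (QIdx n k) (QIdx n k) ℂ)
    (hG : G = M⁻¹ + Matrix.vecMulVec f (star (eIVec n k)))
    (K D L : Matrix (QIdx n k) (QIdx n k) ℂ)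
    (hD : D = blkDiag K) (hL : L = K - (K - D) * T)
    (hLtr : ∀ i j : Fin n, Matrix.vecMul (star (wVec k)) (blk L i j) = star (wVec k))
    (hKac : ∀ i : Fin n,
      dotProduct (star (wVec k)) ((blk D i i).mulVec (fun p => π (i, p))) = 1) :
    ∀ i j : Fin n,
      Matrix.vecMul (star (wVec k)) (blk K i j) =
        Matrix.vecMul (star (wVec k)) (blk (D * (1 - G + blkDiag G * Emat n k)) i j) := by
  intro i j
  classical
  set e : QIdx n k → ℂ := star (eIVec n k) with he
  set w : (Fin k × Fin k) → ℂ := star (wVec k) with hw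
  set vi : QIdx n k → ℂ := fun x => if x.1 = i then w x.2 else 0 with hvi
  set κ : QIdx n k → ℂ := Matrix.vecMul vi K with hκdef
  set δ : QIdx n k → ℂ := Matrix.vecMul vi D with hδdef
  -- block-row component formula
  have hblock : ∀ (A : Matrix (QIdx n k) (QIdx n k) ℂ) (j' : Fin n) (q : Fin k × Fin k),
      Matrix.vecMul vi A (j', q) = Matrix.vecMul w (blk A i j') q := by
    intro A j' q
    show ∑ x : QIdx n k, vi x * A x (j', q) = _
    rw [Fintype.sum_prod_type]
    rw [sum_fin_single i _ (fun i' hi' => by simp [hvi, hi'])]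
    simp [hvi, Matrix.vecMul, dotProduct, blk]
  have heval : ∀ (j' : Fin n) (q : Fin k × Fin k), e (j', q) = star (wVec k q) := by
    intro j' q; simp [he, eIVec]
  -- δ vanishes off block i
  have hδ0 : ∀ (j' : Fin n) (q : Fin k × Fin k), j' ≠ i → δ (j', q) = 0 := by
    intro j' q hj'
    rw [hδdef, hblock]
    have hji : ¬ (i = j') := fun h => hj' h.symm
    simp [Matrix.vecMul, dotProduct, blk, hD, blkDiag, hji]
  have hδc : ∀ p, δ (i, p) = Matrix.vecMul w (blk D i i) p := fun p => hblock D i p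
  have hKDblk : blk D i i = blk K i i := by
    funext p q; simp [hD, blk, blkDiag]
  -- step 1: vi ᵥ* L = e
  have h1 : Matrix.vecMul vi L = e := by
    funext x
    obtain ⟨j', q⟩ := x
    rw [hblock, hLtr i j', heval]
    rfl
  -- step 2
  have h2 : κ - Matrix.vecMul κ T + Matrix.vecMul δ T = e := by
    rw [← h1, hL, Matrix.vecMul_sub, ← Matrix.vecMul_vecMul, Matrix.vecMul_sub,
      Matrix.sub_vecMul]
    abel
  have hb : Matrix.vecMul κ (1 - T) = e - Matrix.vecMul δ T := by
    rw [Matrix.vecMul_sub, Matrix.vecMul_one]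
    exact eq_sub_of_add_eq h2
  set α : ℂ := dotProduct e u with hα
  set b : QIdx n k → ℂ := e - Matrix.vecMul δ T with hbdef
  have hdet : IsUnit M.det := (Matrix.isUnit_iff_isUnit_det M).mp hM
  have hMM : M * M⁻¹ = 1 := Matrix.mul_nonsing_inv M hdet
  have heM : Matrix.vecMul e M = α • e := by
    rw [hMdef, Matrix.vecMul_add, Matrix.vecMul_sub, Matrix.vecMul_one, heT,
      vecMul_vecMulVec_eq]
    simp
    rfl
  have heMinv : Matrix.vecMul e M⁻¹ = α⁻¹ • e := by
    have h0 : α • Matrix.vecMul e M⁻¹ = e := by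
      rw [← Matrix.smul_vecMul, ← heM, Matrix.vecMul_vecMul, hMM, Matrix.vecMul_one]
    calc Matrix.vecMul e M⁻¹ = α⁻¹ • (α • Matrix.vecMul e M⁻¹) := by
          rw [smul_smul, inv_mul_cancel₀ heu, one_smul]
      _ = α⁻¹ • e := by rw [h0]
  set c : ℂ := dotProduct κ u with hc
  have hκM : Matrix.vecMul κ M = b + c • e := by
    rw [hMdef, Matrix.vecMul_add, hb, vecMul_vecMulVec_eq, hbdef]
  have hκeq : κ = Matrix.vecMul b M⁻¹ + (c * α⁻¹) • e := by
    have h0 : κ = Matrix.vecMul (Matrix.vecMul κ M) M⁻¹ := by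
      rw [Matrix.vecMul_vecMul, hMM, Matrix.vecMul_one]
    conv_lhs => rw [h0]
    rw [hκM, Matrix.add_vecMul, Matrix.smul_vecMul, heMinv, smul_smul]
  have hGb : Matrix.vecMul b G = Matrix.vecMul b M⁻¹ + (dotProduct b f) • e := by
    rw [hG, Matrix.vecMul_add, vecMul_vecMulVec_eq]
  have hκG : κ = Matrix.vecMul b G + (c * α⁻¹ - dotProduct b f) • e := by
    rw [hκeq, hGb]; module
  have heG : Matrix.vecMul e G = (α⁻¹ + dotProduct e f) • e := by
    rw [hG, Matrix.vecMul_add, heMinv, vecMul_vecMulVec_eq, add_smul]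
  have hT : T = 1 - M + Matrix.vecMulVec u e := by rw [hMdef]; abel
  have hδM : Matrix.vecMul δ (M * G) = δ + (dotProduct (Matrix.vecMul δ M) f) • e := by
    rw [← Matrix.vecMul_vecMul, hG, Matrix.vecMul_add, vecMul_vecMulVec_eq,
      Matrix.vecMul_vecMul, hMM, Matrix.vecMul_one]
  have hδuG : Matrix.vecMul δ (Matrix.vecMulVec u e * G)
      = (dotProduct δ u * (α⁻¹ + dotProduct e f)) • e := by
    rw [← Matrix.vecMul_vecMul, vecMul_vecMulVec_eq, Matrix.smul_vecMul, heG, smul_smul]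
  have hδTG : Matrix.vecMul (Matrix.vecMul δ T) G =
      Matrix.vecMul δ G - δ - (dotProduct (Matrix.vecMul δ M) f) • e
        + (dotProduct δ u * (α⁻¹ + dotProduct e f)) • e := by
    rw [Matrix.vecMul_vecMul]
    have hTG : T * G = G - M * G + Matrix.vecMulVec u e * G := by
      rw [hT, Matrix.add_mul, Matrix.sub_mul, Matrix.one_mul]
    rw [hTG, Matrix.vecMul_add, Matrix.vecMul_sub, hδM, hδuG]
    abel
  have hbG2 : Matrix.vecMul b G = (α⁻¹ + dotProduct e f) • e
      - Matrix.vecMul δ G + δ + (dotProduct (Matrix.vecMul δ M) f) • e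
      - (dotProduct δ u * (α⁻¹ + dotProduct e f)) • e := by
    rw [hbdef, Matrix.sub_vecMul, heG, hδTG]; abel
  obtain ⟨s, key⟩ : ∃ s : ℂ, κ - δ + Matrix.vecMul δ G = s • e := by
    refine ⟨(c * α⁻¹ - dotProduct b f) + (α⁻¹ + dotProduct e f)
      + dotProduct (Matrix.vecMul δ M) f
      - dotProduct δ u * (α⁻¹ + dotProduct e f), ?_⟩
    rw [hκG, hbG2]; module
  have keyApp : ∀ x : QIdx n k, κ x - δ x + Matrix.vecMul δ G x = s * e x := by
    intro x
    have h0 := congrFun key x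
    simpa using h0
  -- component formula for δ ᵥ* G
  have hδGc : ∀ (j' : Fin n) (q : Fin k × Fin k),
      Matrix.vecMul δ G (j', q) = Matrix.vecMul (Matrix.vecMul w (blk D i i)) (blk G i j') q := by
    intro j' q
    show ∑ x : QIdx n k, δ x * G x (j', q) = _
    rw [Fintype.sum_prod_type]
    rw [sum_fin_single i _ (fun i' hi' =>
      Finset.sum_eq_zero fun p _ => by rw [hδ0 i' p hi', zero_mul])]
    show _ = ∑ p, Matrix.vecMul w (blk D i i) p * blk G i j' p q
    exact Finset.sum_congr rfl fun p _ => by rw [hδc p]; rfl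
  -- block structure of the right-hand side matrix
  have hblkmul : ∀ (X : Matrix (QIdx n k) (QIdx n k) ℂ),
      blk (D * X) i j = blk D i i * blk X i j := by
    intro X
    funext p q
    show (D * X) (i, p) (j, q) = _
    rw [Matrix.mul_apply, Fintype.sum_prod_type]
    rw [sum_fin_single i _ (fun i' hi' => Finset.sum_eq_zero fun p' _ => by
      have : ¬ (i = i') := fun h => hi' h.symm
      simp [hD, blkDiag, this])]
    rw [Matrix.mul_apply]
    rfl
  have hGE : ∀ (p q : Fin k × Fin k),
      (blkDiag G * Emat n k) (i, p) (j, q) = G (i, p) (i, q) := by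
    intro p q
    rw [Matrix.mul_apply, Fintype.sum_prod_type]
    rw [sum_fin_single i _ (fun i' hi' => Finset.sum_eq_zero fun p' _ => by
      have : ¬ (i = i') := fun h => hi' h.symm
      simp [blkDiag, this])]
    simp [blkDiag, Emat, mul_ite, mul_one, mul_zero]
  -- final assembly
  funext q
  have hj := keyApp (j, q)
  have hi := keyApp (i, q)
  rw [hκdef, hblock K j q, hδGc j q] at hj
  rw [hκdef, hblock K i q, hδGc i q, hδc q] at hi
  have hKD'' : Matrix.vecMul w (blk K i i) q = Matrix.vecMul w (blk D i i) q := by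
    rw [hKDblk]
  -- hi now gives: w D_ii G_ii = s * e
  have hGii : Matrix.vecMul (Matrix.vecMul w (blk D i i)) (blk G i i) q = s * e (i, q) := by
    linear_combination hi - hKD''
  -- compute the goal's RHS
  have hRHS : Matrix.vecMul w (blk (D * (1 - G + blkDiag G * Emat n k)) i j) q
      = δ (j, q) - Matrix.vecMul (Matrix.vecMul w (blk D i i)) (blk G i j) q
        + Matrix.vecMul (Matrix.vecMul w (blk D i i)) (blk G i i) q := by
    rw [hblkmul]
    have hZ : blk (1 - G + blkDiag G * Emat n k) i j
        = (if i = j then (1 : Matrix (Fin k × Fin k) (Fin k × Fin k) ℂ) else 0)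
          - blk G i j + blk G i i := by
      funext p' q'
      have h1' : (1 : Matrix (QIdx n k) (QIdx n k) ℂ) (i, p') (j, q')
          = (if i = j then (1 : Matrix (Fin k × Fin k) (Fin k × Fin k) ℂ) else 0) p' q' := by
        by_cases hij : i = j
        · subst hij; simp [Matrix.one_apply, Prod.ext_iff]
        · simp [Matrix.one_apply, Prod.ext_iff, hij]
      show (1 - G + blkDiag G * Emat n k) (i, p') (j, q') = _
      rw [Matrix.add_apply, Matrix.sub_apply, hGE p' q', h1']
      simp [blk]
    rw [hZ, Matrix.mul_add, Matrix.mul_sub, Matrix.vecMul_add, Matrix.vecMul_sub,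
      Matrix.vecMul_vecMul, Matrix.vecMul_vecMul]
    simp only [Pi.sub_apply, Pi.add_apply]
    have hfirst : Matrix.vecMul w (blk D i i
        * (if i = j then (1 : Matrix (Fin k × Fin k) (Fin k × Fin k) ℂ) else 0)) q
        = δ (j, q) := by
      by_cases hij : i = j
      · subst hij
        rw [if_pos rfl, Matrix.mul_one, ← hδc q]
      · rw [if_neg hij, Matrix.mul_zero]
        rw [hδ0 j q (fun h => hij h.symm)]
        simp [Matrix.vecMul]
    rw [hfirst]
  rw [hRHS]
  have hej : e (j, q) = e (i, q) := by rw [heval, heval]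
  rw [hej] at hj
  linear_combination hj - hGii
end

section
/- Block setting with n vertices, internal degree k, N = nk². Let T be an N×N complex matrix with Tπ = π for some π ∈ ℂ^N satisfying e_I^*π = 1, and with e_I^*T = e_I^*; set Ω := π e_I^* and suppose I − T + Ω is invertible with Z := (I − T + Ω)^{-1}. Let K be an N×N matrix and D := K_d its block-diagonal part. Assume: (i) the first mean hitting time formula holds: w^* K_{ij} = w^* D_{ii}(Z_{ii} − Z_{ij}) for all block indices i,j; (ii) every diagonal block D_{ii} is invertible; and (iii) there is a scalar c ∈ ℂ such that w^* D_{ii} = c · w^* for every i. Then for all i,j: w^* (D_{ii})^{-1} K_{ij} = w^* (Z_{ii} − Z_{ij}). Moreover, for every v ∈ ℂ^{k²} with w^*v = 1 (e.g. v = vec(ρ) for a density matrix ρ), the 'target time' Σ_{i=1}^n w^* (D_{ii})^{-1} K_{ij} v equals ( Σ_{i=1}^n w^* Z_{ii} v ) − 1; in particular this quantity does not depend on the block column index j. -/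
open Matrix

/-- Random Target Lemma for QMCs: assuming the first mean hitting time
formula `w^* K_{ij} = w^* D_{ii}(Z_{ii} − Z_{ij})`, invertibility of the diagonal blocks
`D_{ii}` and `w^* D_{ii} = c w^*` for all `i`, one gets
`w^* D_{ii}⁻¹ K_{ij} = w^*(Z_{ii} − Z_{ij})`, and for every `v` with `w^*v = 1` the target
time `Σ_i w^* D_{ii}⁻¹ K_{ij} v` equals `(Σ_i w^* Z_{ii} v) − 1`, independently of `j`. -/
theorem random_target_lemma_QMC {n k : ℕ}
    (T : Matrix (QIdx n k) (QIdx n k) ℂ)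
    (π : QIdx n k → ℂ) (hTπ : T.mulVec π = π)
    (hπ1 : dotProduct (star (eIVec n k)) π = 1)
    (heT : Matrix.vecMul (star (eIVec n k)) T = star (eIVec n k))
    (Ω : Matrix (QIdx n k) (QIdx n k) ℂ)
    (hΩ : Ω = Matrix.vecMulVec π (star (eIVec n k)))
    (hZu : IsUnit (1 - T + Ω))
    (Z : Matrix (QIdx n k) (QIdx n k) ℂ) (hZ : Z = (1 - T + Ω)⁻¹)
    (K D : Matrix (QIdx n k) (QIdx n k) ℂ) (hD : D = blkDiag K)
    (hMHTF : ∀ i j : Fin n,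
      Matrix.vecMul (star (wVec k)) (blk K i j) =
        Matrix.vecMul (star (wVec k)) (blk D i i * (blk Z i i - blk Z i j)))
    (hDinv : ∀ i : Fin n, IsUnit (blk D i i))
    (c : ℂ)
    (hc : ∀ i : Fin n,
      Matrix.vecMul (star (wVec k)) (blk D i i) = c • star (wVec k)) :
    (∀ i j : Fin n,
      Matrix.vecMul (star (wVec k)) ((blk D i i)⁻¹ * blk K i j) =
        Matrix.vecMul (star (wVec k)) (blk Z i i - blk Z i j)) ∧
    (∀ (j : Fin n) (v : Fin k × Fin k → ℂ),
      dotProduct (star (wVec k)) v = 1 →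
        (∑ i : Fin n,
          dotProduct (star (wVec k)) (((blk D i i)⁻¹ * blk K i j).mulVec v)) =
        (∑ i : Fin n, dotProduct (star (wVec k)) ((blk Z i i).mulVec v)) - 1) := by
  -- D_ii * D_ii⁻¹ = 1
  have hDD : ∀ i : Fin n, blk D i i * (blk D i i)⁻¹ = 1 := fun i =>
    Matrix.mul_nonsing_inv _ ((Matrix.isUnit_iff_isUnit_det _).mp (hDinv i))
  -- main pointwise identity
  have hKey : ∀ i j : Fin n,
      Matrix.vecMul (star (wVec k)) ((blk D i i)⁻¹ * blk K i j) =
        Matrix.vecMul (star (wVec k)) (blk Z i i - blk Z i j) := by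
    intro i j
    by_cases hc0 : c = 0
    · -- then star (wVec k) = 0 since D_ii is invertible
      have hw0 : star (wVec k) = (0 : Fin k × Fin k → ℂ) := by
        have h1 : Matrix.vecMul (Matrix.vecMul (star (wVec k)) (blk D i i))
            (blk D i i)⁻¹ = star (wVec k) := by
          rw [Matrix.vecMul_vecMul, hDD i, Matrix.vecMul_one]
        rw [hc i, hc0, zero_smul, Matrix.zero_vecMul] at h1
        exact h1.symm
      simp [hw0, Matrix.zero_vecMul]
    · -- star (wVec k) ∘ D_ii⁻¹ = c⁻¹ • star (wVec k)
      have hwDinv : Matrix.vecMul (star (wVec k)) (blk D i i)⁻¹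
          = c⁻¹ • star (wVec k) := by
        have h1 : Matrix.vecMul (Matrix.vecMul (star (wVec k)) (blk D i i))
            (blk D i i)⁻¹ = star (wVec k) := by
          rw [Matrix.vecMul_vecMul, hDD i, Matrix.vecMul_one]
        rw [hc i, Matrix.smul_vecMul] at h1
        calc Matrix.vecMul (star (wVec k)) (blk D i i)⁻¹
            = c⁻¹ • (c • Matrix.vecMul (star (wVec k)) (blk D i i)⁻¹) := by
              rw [smul_smul, inv_mul_cancel₀ hc0, one_smul]
          _ = c⁻¹ • star (wVec k) := by rw [h1]
      rw [← Matrix.vecMul_vecMul, hwDinv, Matrix.smul_vecMul, hMHTF i j,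
        ← Matrix.vecMul_vecMul, hc i, Matrix.smul_vecMul, smul_smul,
        inv_mul_cancel₀ hc0, one_smul]
  refine ⟨hKey, ?_⟩
  -- e_I^* (1 - T + Ω) = e_I^*
  have heA : Matrix.vecMul (star (eIVec n k)) (1 - T + Ω) = star (eIVec n k) := by
    rw [Matrix.vecMul_add, Matrix.vecMul_sub, Matrix.vecMul_one, heT, hΩ]
    have : Matrix.vecMul (star (eIVec n k)) (Matrix.vecMulVec π (star (eIVec n k)))
        = star (eIVec n k) := by
      funext x
      simp only [Matrix.vecMul, Matrix.vecMulVec, dotProduct, Matrix.of_apply]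
      rw [show (∑ y, star (eIVec n k) y * (π y * star (eIVec n k) x))
          = (∑ y, star (eIVec n k) y * π y) * star (eIVec n k) x by
        rw [Finset.sum_mul]; congr 1; funext y; ring]
      have : (∑ y, star (eIVec n k) y * π y) = 1 := hπ1
      rw [this, one_mul]
    rw [this]; ring_nf
  -- hence e_I^* Z = e_I^*
  have hAZ : (1 - T + Ω) * Z = 1 := by
    rw [hZ]; exact Matrix.mul_nonsing_inv _ ((Matrix.isUnit_iff_isUnit_det _).mp hZu)
  have heZ : Matrix.vecMul (star (eIVec n k)) Z = star (eIVec n k) := by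
    calc Matrix.vecMul (star (eIVec n k)) Z
        = Matrix.vecMul (Matrix.vecMul (star (eIVec n k)) (1 - T + Ω)) Z := by rw [heA]
      _ = Matrix.vecMul (star (eIVec n k)) ((1 - T + Ω) * Z) := by
          rw [Matrix.vecMul_vecMul]
      _ = star (eIVec n k) := by rw [hAZ, Matrix.vecMul_one]
  -- blockwise: Σ_i w^* Z_{ij} = w^*
  have hsumZ : ∀ j : Fin n,
      (∑ i : Fin n, Matrix.vecMul (star (wVec k)) (blk Z i j)) = star (wVec k) := by
    intro j
    funext q
    have := congrFun heZ (j, q)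
    simp only [Matrix.vecMul, dotProduct] at this
    rw [Fintype.sum_prod_type] at this
    have heq : ∀ x : QIdx n k, star (eIVec n k) x = star (wVec k) x.2 := by
      intro x; simp [eIVec, Pi.star_apply]
    simp only [Finset.sum_apply]
    calc (∑ i : Fin n, Matrix.vecMul (star (wVec k)) (blk Z i j) q)
        = ∑ i : Fin n, ∑ p, star (eIVec n k) (i, p) * Z (i, p) (j, q) := by
          refine Finset.sum_congr rfl fun i _ => ?_
          simp only [Matrix.vecMul, dotProduct, blk]
          refine Finset.sum_congr rfl fun p _ => ?_
          rw [heq (i, p)]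
      _ = star (eIVec n k) (j, q) := this
      _ = star (wVec k) q := heq (j, q)
  intro j v hv
  have step1 : ∀ i : Fin n,
      dotProduct (star (wVec k)) (((blk D i i)⁻¹ * blk K i j).mulVec v)
        = dotProduct (star (wVec k)) ((blk Z i i).mulVec v)
          - dotProduct (star (wVec k)) ((blk Z i j).mulVec v) := by
    intro i
    rw [Matrix.dotProduct_mulVec, hKey i j, ← Matrix.dotProduct_mulVec,
      Matrix.sub_mulVec, dotProduct_sub]
  rw [Finset.sum_congr rfl fun i _ => step1 i, Finset.sum_sub_distrib]
  congr 1
  calc (∑ i : Fin n, dotProduct (star (wVec k)) ((blk Z i j).mulVec v))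
      = ∑ i : Fin n, dotProduct (Matrix.vecMul (star (wVec k)) (blk Z i j)) v := by
        refine Finset.sum_congr rfl fun i _ => ?_
        rw [Matrix.dotProduct_mulVec]
    _ = dotProduct (∑ i : Fin n, Matrix.vecMul (star (wVec k)) (blk Z i j)) v := by
        simp only [dotProduct, Finset.sum_apply, Finset.sum_mul]
        exact Finset.sum_comm
    _ = 1 := by rw [hsumZ j, hv]
end

section
/- Let d ≥ 1 and let (u_m)_{m≥0} and (f_k)_{k≥0} be sequences of d×d complex matrices, and let Ω and π be d×d complex matrices. Assume: (i) for every m ≥ 0, Σ_{k=0}^m (u_{m−k} + Ω) f_k = π (a renewal/convolution identity); (ii) Σ_{m≥0} ‖u_m‖ < ∞; and (iii) Σ_{k≥0} (k+1)‖f_k‖ < ∞. Then π = Ω · ( Σ_{k≥0} f_k ) and Ω · ( Σ_{k≥0} k·f_k ) = ( Σ_{m≥0} u_m ) · ( Σ_{k≥0} f_k ). -/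
/-!
Write `c m = ∑_{k ≤ m} u (m - k) f k`, so the hypothesis reads `c m + Ω S_{m+1} = π` with
`S_N = ∑_{k < N} f k`. Absolute summability makes `c` the Cauchy product of `u` and `f`, with
sum `U F` where `U = ∑ u` and `F = ∑ f`; in particular `c m → 0`, and letting `m → ∞` gives
`π = Ω F`. Summing the hypothesis over `m < N` and using
`∑_{m < N} S_{m+1} = N S_N - ∑_{k < N} k f k` gives
`∑_{m < N} c m - Ω ∑_{k < N} k f k = Ω (N (F - S_N))`. The right side tends to `0` because
`N ‖F - S_N‖ ≤ ∑_{k ≥ N} k ‖f k‖`, so in the limit `U F = Ω ∑_k k f k`.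
-/

open Filter Finset Topology

attribute [local instance] Matrix.normedAddCommGroup Matrix.normedSpace

theorem sum_range_sum_range_succ_add_sum_range_nsmul {M : Type*} [AddCommMonoid M]
    (f : ℕ → M) (N : ℕ) :
    ∑ m ∈ range N, ∑ k ∈ range (m + 1), f k + ∑ k ∈ range N, k • f k
      = N • ∑ k ∈ range N, f k := by
  induction N with
  | zero => simp
  | succ N ih =>
    rw [sum_range_succ, sum_range_succ (fun k => k • f k), add_add_add_comm, ih,
      sum_range_succ f, succ_nsmul, nsmul_add]
    abel

theorem HasSum.tendsto_nsmul_sub_sum_range {E : Type*} [NormedAddCommGroup E]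
    {f : ℕ → E} {F : E} (hF : HasSum f F) (hf : Summable fun k : ℕ => (k : ℝ) * ‖f k‖) :
    Tendsto (fun N : ℕ => N • (F - ∑ k ∈ range N, f k)) atTop (𝓝 0) := by
  have hbound : ∀ N : ℕ,
      ‖N • (F - ∑ k ∈ range N, f k)‖ ≤ ∑' k : ℕ, ((k + N : ℕ) : ℝ) * ‖f (k + N)‖ := by
    intro N
    have htail : F - ∑ k ∈ range N, f k = ∑' k, f (k + N) := by
      rw [← hF.tsum_eq, ← hF.summable.sum_add_tsum_nat_add N, add_sub_cancel_left]
    rw [htail, ← ((summable_nat_add_iff N).2 hF.summable).tsum_const_smul]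
    refine tsum_of_norm_bounded ((summable_nat_add_iff N).2 hf).hasSum fun k => ?_
    refine norm_nsmul_le.trans (mul_le_mul_of_nonneg_right ?_ (norm_nonneg _))
    exact_mod_cast Nat.le_add_left N k
  exact squeeze_zero_norm hbound (tendsto_sum_nat_add fun k : ℕ => (k : ℝ) * ‖f k‖)

theorem Matrix.norm_mul_le_card_mul {l m n α : Type*} [Fintype l] [Fintype m] [Fintype n]
    [NormedRing α] (A : Matrix l m α) (B : Matrix m n α) :
    ‖A * B‖ ≤ Fintype.card m * ‖A‖ * ‖B‖ := by
  refine (Matrix.norm_le_iff (by positivity)).2 fun i j => ?_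
  calc ‖(A * B) i j‖ ≤ ∑ k, ‖A i k * B k j‖ := norm_sum_le _ _
    _ ≤ ∑ _k : m, ‖A‖ * ‖B‖ := by
      gcongr with k
      exact (norm_mul_le _ _).trans (mul_le_mul A.norm_entry_le_entrywise_sup_norm
        B.norm_entry_le_entrywise_sup_norm (norm_nonneg _) (norm_nonneg _))
    _ = Fintype.card m * ‖A‖ * ‖B‖ := by rw [sum_const, card_univ, nsmul_eq_mul, mul_assoc]

theorem Matrix.hasSum_sum_range_mul_of_summable_norm {n 𝕜 : Type*} [Fintype n] [DecidableEq n]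
    [RCLike 𝕜] {u f : ℕ → Matrix n n 𝕜}
    (hu : Summable fun m => ‖u m‖) (hf : Summable fun k => ‖f k‖) :
    HasSum (fun m => ∑ k ∈ range (m + 1), u (m - k) * f k) ((∑' m, u m) * ∑' k, f k) := by
  have hprod : Summable fun p : ℕ × ℕ => u p.1 * f p.2 := by
    refine Summable.of_norm_bounded ((hu.mul_left (Fintype.card n : ℝ)).mul_of_nonneg hf
      (fun _ => by positivity) fun _ => norm_nonneg _) fun p => ?_
    exact Matrix.norm_mul_le_card_mul _ _
  have hreflect : ∀ m, ∑ k ∈ range (m + 1), u (m - k) * f k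
      = ∑ k ∈ range (m + 1), u k * f (m - k) := fun m => by
    rw [← sum_range_reflect]
    refine sum_congr rfl fun k hk => ?_
    rw [mem_range] at hk
    congr 2; omega
  -- `hu.of_norm` lives in the sup-norm topology, which is not reducibly the entrywise topology that
  -- carries Mathlib's topological ring instance on matrices; restating the types switches to it.
  have hu' : Summable u := hu.of_norm
  have hf' : Summable f := hf.of_norm
  simp_rw [hreflect, hu'.tsum_mul_tsum_eq_tsum_sum_range hf' hprod]
  exact (summable_sum_mul_range_of_summable_mul hprod).hasSum

section Renewal

variable {R : Type*} [Ring R] {u f : ℕ → R} {Ω π : R}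

theorem sum_add_mul_sum_eq_of_renewal (hconv : ∀ m, ∑ k ∈ range (m + 1), (u (m - k) + Ω) * f k = π) (m : ℕ) :
    ∑ k ∈ range (m + 1), u (m - k) * f k + Ω * ∑ k ∈ range (m + 1), f k = π := by
  rw [← hconv m, mul_sum, ← sum_add_distrib]
  simp only [add_mul]

variable [TopologicalSpace R] [IsTopologicalRing R] [T2Space R]

theorem renewal_eq_mul_of_hasSum {F : R}
    (hconv : ∀ m, ∑ k ∈ range (m + 1), (u (m - k) + Ω) * f k = π)
    (hc : Summable fun m => ∑ k ∈ range (m + 1), u (m - k) * f k) (hF : HasSum f F) :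
    π = Ω * F := by
  have hlim : Tendsto (fun m => ∑ k ∈ range (m + 1), u (m - k) * f k
      + Ω * ∑ k ∈ range (m + 1), f k) atTop (𝓝 (0 + Ω * F)) :=
    hc.tendsto_atTop_zero.add
      ((hF.tendsto_sum_nat.comp (tendsto_add_atTop_nat 1)).const_mul Ω)
  simp only [sum_add_mul_sum_eq_of_renewal hconv, zero_add] at hlim
  exact tendsto_nhds_unique tendsto_const_nhds hlim

theorem renewal_mul_eq_of_hasSum {C F G : R}
    (hconv : ∀ m, ∑ k ∈ range (m + 1), (u (m - k) + Ω) * f k = π)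
    (hc : HasSum (fun m => ∑ k ∈ range (m + 1), u (m - k) * f k) C) (hF : HasSum f F)
    (hG : HasSum (fun k => k • f k) G)
    (htail : Tendsto (fun N : ℕ => N • (F - ∑ k ∈ range N, f k)) atTop (𝓝 0)) :
    Ω * G = C := by
  have hπ := renewal_eq_mul_of_hasSum hconv hc.summable hF
  have hpartial : ∀ N : ℕ,
      ∑ m ∈ range N, ∑ k ∈ range (m + 1), u (m - k) * f k - Ω * ∑ k ∈ range N, k • f k
        = Ω * (N • (F - ∑ k ∈ range N, f k)) := by
    intro N
    have hsum := sum_congr rfl fun m (_ : m ∈ range N) => sum_add_mul_sum_eq_of_renewal hconv m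
    rw [sum_add_distrib, ← mul_sum, sum_const, card_range, hπ] at hsum
    calc _ = ∑ m ∈ range N, ∑ k ∈ range (m + 1), u (m - k) * f k
            + Ω * ∑ m ∈ range N, ∑ k ∈ range (m + 1), f k
          - Ω * (∑ m ∈ range N, ∑ k ∈ range (m + 1), f k + ∑ k ∈ range N, k • f k) := by
          rw [mul_add]; abel
      _ = N • (Ω * F) - Ω * (N • ∑ k ∈ range N, f k) := by
          rw [hsum, sum_range_sum_range_succ_add_sum_range_nsmul]
      _ = Ω * (N • (F - ∑ k ∈ range N, f k)) := by
          rw [nsmul_sub, mul_sub, mul_smul_comm, mul_smul_comm]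
  have hlim := (hc.tendsto_sum_nat.sub (hG.tendsto_sum_nat.const_mul Ω)).congr hpartial
  have hzero := htail.const_mul Ω
  rw [mul_zero] at hzero
  exact (sub_eq_zero.mp (tendsto_nhds_unique hlim hzero)).symm

end Renewal

theorem renewal_derivative_identity_general {d : ℕ}
    (u f : ℕ → Matrix (Fin d) (Fin d) ℂ)
    (Ω π : Matrix (Fin d) (Fin d) ℂ)
    (hconv : ∀ m : ℕ, ∑ k ∈ Finset.range (m + 1), (u (m - k) + Ω) * f k = π)
    (hu : Summable fun m : ℕ => ‖u m‖)
    (hf : Summable fun k : ℕ => ((k : ℝ) + 1) * ‖f k‖) :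
    π = Ω * (∑' k : ℕ, f k) ∧
      Ω * (∑' k : ℕ, (k : ℂ) • f k) = (∑' m : ℕ, u m) * (∑' k : ℕ, f k) := by
  have hfn : Summable fun k => ‖f k‖ :=
    hf.of_nonneg_of_le (fun _ => norm_nonneg _) fun k => by nlinarith [norm_nonneg (f k)]
  have hkf : Summable fun k : ℕ => (k : ℝ) * ‖f k‖ :=
    hf.of_nonneg_of_le (fun _ => by positivity) fun k => by nlinarith [norm_nonneg (f k)]
  have hF := hfn.of_norm.hasSum
  have hc := Matrix.hasSum_sum_range_mul_of_summable_norm hu hfn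
  have hG : HasSum (fun k => k • f k) (∑' k : ℕ, (k : ℂ) • f k) := by
    simp_rw [← Nat.cast_smul_eq_nsmul ℂ]
    exact (Summable.of_norm_bounded hkf fun k => by
      rw [norm_smul, Complex.norm_natCast]).hasSum
  exact ⟨renewal_eq_mul_of_hasSum hconv hc.summable hF,
    renewal_mul_eq_of_hasSum hconv hc hF hG (hF.tendsto_nsmul_sub_sum_range hkf)⟩

/-- analytic core of the second mean hitting time formula: if
`Σ_{k=0}^m (u_{m−k} + Ω) f_k = π` for all `m`, `Σ ‖u_m‖ < ∞` and `Σ (k+1)‖f_k‖ < ∞`,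
then `π = Ω (Σ_k f_k)` and `Ω (Σ_k k f_k) = (Σ_m u_m)(Σ_k f_k)`. -/
theorem renewal_derivative_identity {d : ℕ} (hd : 1 ≤ d)
    (u f : ℕ → Matrix (Fin d) (Fin d) ℂ)
    (Ω π : Matrix (Fin d) (Fin d) ℂ)
    (hconv : ∀ m : ℕ, ∑ k ∈ Finset.range (m + 1), (u (m - k) + Ω) * f k = π)
    (hu : Summable fun m : ℕ => ‖u m‖)
    (hf : Summable fun k : ℕ => ((k : ℝ) + 1) * ‖f k‖) :
    π = Ω * (∑' k : ℕ, f k) ∧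
      Ω * (∑' k : ℕ, (k : ℂ) • f k) = (∑' m : ℕ, u m) * (∑' k : ℕ, f k) :=
  renewal_derivative_identity_general u f Ω π hconv hu hf
end
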